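/- arXiv:1110.3168 — 10 statements merged into one kernel-verified Lean document; each statement's English description precedes it below -/
import Mathlib

section
/- If α, β : ℕ → A are equivalent sequences, then p_p(α) = p_p(β) in l^p(A); that is, the map s_p on Lipscomb's quotient space L(A) induced by p_p is well defined. -/
open scoped ENNReal
open Filter Topology

/-- For a sequence `α : ℕ → A`, the function `p_p(α) : A' → ℝ` (where `A' = A \ {z}`)
given by `p_p(α)(b) = ∑_{k ∈ ℕ, α k = b} 2^{-(k+1)}`. -/
noncomputable def pFun {A : Type*} (z : A) (α : ℕ → A) (b : {b : A // b ≠ z}) : ℝ :=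
  ∑' k : {k : ℕ | α k = (b : A)}, (2 : ℝ)⁻¹ ^ ((k : ℕ) + 1)

/-- Two sequences `α β : ℕ → A` are equivalent if they are equal, or there are `k : ℕ` and
`a ≠ b` in `A` such that `α` and `β` agree before index `k`, `α k = a`, `α j = b` for all
`j > k`, while `β k = b` and `β j = a` for all `j > k`. -/
def SeqEquiv {A : Type*} (α β : ℕ → A) : Prop :=
  α = β ∨ ∃ (k : ℕ) (a b : A), a ≠ b ∧ (∀ j < k, α j = β j) ∧
    α k = a ∧ (∀ j, k < j → α j = b) ∧ β k = b ∧ (∀ j, k < j → β j = a)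

private lemma summable_f : Summable (fun n : ℕ => (2 : ℝ)⁻¹ ^ (n + 1)) := by
  have h : Summable fun n : ℕ => (2 : ℝ)⁻¹ * (2 : ℝ)⁻¹ ^ n :=
    (summable_geometric_of_lt_one (by norm_num) (by norm_num)).mul_left _
  exact h.congr fun n => by rw [pow_succ]; ring

private lemma tail_sum (k : ℕ) :
    ∑' n : ℕ, (2 : ℝ)⁻¹ ^ (n + (k + 1) + 1) = (2 : ℝ)⁻¹ ^ (k + 1) := by
  have h : ∀ n : ℕ, (2 : ℝ)⁻¹ ^ (n + (k + 1) + 1) = (2 : ℝ)⁻¹ ^ n * (2 : ℝ)⁻¹ ^ (k + 2) := by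
    intro n; rw [← pow_add]; ring_nf
  rw [tsum_congr h, tsum_mul_right]
  have hg : ∑' n : ℕ, (2 : ℝ)⁻¹ ^ n = 2 := by
    rw [tsum_geometric_of_lt_one (by norm_num) (by norm_num)]; norm_num
  rw [hg, pow_succ]; ring

/-- If `α` and `β` are equivalent sequences, then `p_p(α) = p_p(β)`
in `l^p(A)`; i.e. the induced map `s_p` on Lipscomb's space `L(A)` is well defined. -/
theorem pFun_eq_of_seqEquiv {A : Type*} [Infinite A] (z : A) (p : ℝ) (hp : 1 ≤ p)
    (α β : ℕ → A) (h : SeqEquiv α β) :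
    pFun z α = pFun z β := by
  rcases h with rfl | ⟨k, a, b, hab, hpre, hak, hagt, hbk, hbgt⟩
  · rfl
  funext c
  set f : ℕ → ℝ := fun n => (2 : ℝ)⁻¹ ^ (n + 1) with hfdef
  have key : ∀ γ : ℕ → A,
      pFun z γ c = (∑ i ∈ Finset.range k, Set.indicator {n : ℕ | γ n = (c : A)} f i)
        + (Set.indicator {n : ℕ | γ n = (c : A)} f k
        + ∑' n : ℕ, Set.indicator {n : ℕ | γ n = (c : A)} f (n + (k + 1))) := by
    intro γ
    have hs : Summable (Set.indicator {n : ℕ | γ n = (c : A)} f) := summable_f.indicator _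
    simp only [pFun]
    rw [tsum_subtype {n : ℕ | γ n = (c : A)} f,
      ← Summable.sum_add_tsum_nat_add (k + 1) hs, Finset.sum_range_succ]
    ring
  rw [key α, key β]
  have hhead : ∀ i ∈ Finset.range k,
      Set.indicator {n : ℕ | α n = (c : A)} f i = Set.indicator {n : ℕ | β n = (c : A)} f i := by
    intro i hi
    rw [Finset.mem_range] at hi
    simp only [Set.indicator, Set.mem_setOf_eq]
    have h' := hpre i hi
    split_ifs with h1 h2 <;> simp_all
  rw [Finset.sum_congr rfl hhead]
  congr 1
  have hlt : ∀ n : ℕ, k < n + (k + 1) := fun n => by omega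
  by_cases hca : (c : A) = a
  · have hcb : (c : A) ≠ b := by rw [hca]; exact hab
    have h1 : Set.indicator {n : ℕ | α n = (c : A)} f k = f k :=
      Set.indicator_of_mem (by simp [Set.mem_setOf_eq, hak, hca]) _
    have h2 : Set.indicator {n : ℕ | β n = (c : A)} f k = 0 :=
      Set.indicator_of_notMem (by simp only [Set.mem_setOf_eq, hbk]; exact fun h => hcb h.symm) _
    have h3 : ∀ n : ℕ, Set.indicator {n : ℕ | α n = (c : A)} f (n + (k + 1)) = 0 := fun n =>
      Set.indicator_of_notMem
        (by simp only [Set.mem_setOf_eq, hagt _ (hlt n)]; exact fun h => hcb h.symm) _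
    have h4 : ∀ n : ℕ, Set.indicator {n : ℕ | β n = (c : A)} f (n + (k + 1)) = f (n + (k + 1)) :=
      fun n => Set.indicator_of_mem (by simp [Set.mem_setOf_eq, hbgt _ (hlt n), hca]) _
    rw [h1, h2, tsum_congr h3, tsum_congr h4, tsum_zero, hfdef]
    simpa using (tail_sum k).symm
  · by_cases hcb : (c : A) = b
    · have h1 : Set.indicator {n : ℕ | α n = (c : A)} f k = 0 :=
        Set.indicator_of_notMem (by simp only [Set.mem_setOf_eq, hak]; exact fun h => hca h.symm) _
      have h2 : Set.indicator {n : ℕ | β n = (c : A)} f k = f k :=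
        Set.indicator_of_mem (by simp [Set.mem_setOf_eq, hbk, hcb]) _
      have h3 : ∀ n : ℕ, Set.indicator {n : ℕ | α n = (c : A)} f (n + (k + 1)) = f (n + (k + 1)) :=
        fun n => Set.indicator_of_mem (by simp [Set.mem_setOf_eq, hagt _ (hlt n), hcb]) _
      have h4 : ∀ n : ℕ, Set.indicator {n : ℕ | β n = (c : A)} f (n + (k + 1)) = 0 := fun n =>
        Set.indicator_of_notMem
          (by simp only [Set.mem_setOf_eq, hbgt _ (hlt n)]; exact fun h => hca h.symm) _
      rw [h1, h2, tsum_congr h3, tsum_congr h4, tsum_zero, hfdef]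
      simpa using tail_sum k
    · have h1 : Set.indicator {n : ℕ | α n = (c : A)} f k = 0 :=
        Set.indicator_of_notMem (by simp only [Set.mem_setOf_eq, hak]; exact fun h => hca h.symm) _
      have h2 : Set.indicator {n : ℕ | β n = (c : A)} f k = 0 :=
        Set.indicator_of_notMem (by simp only [Set.mem_setOf_eq, hbk]; exact fun h => hcb h.symm) _
      have h3 : ∀ n : ℕ, Set.indicator {n : ℕ | α n = (c : A)} f (n + (k + 1)) = 0 := fun n =>
        Set.indicator_of_notMem
          (by simp only [Set.mem_setOf_eq, hagt _ (hlt n)]; exact fun h => hcb h.symm) _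
      have h4 : ∀ n : ℕ, Set.indicator {n : ℕ | β n = (c : A)} f (n + (k + 1)) = 0 := fun n =>
        Set.indicator_of_notMem
          (by simp only [Set.mem_setOf_eq, hbgt _ (hlt n)]; exact fun h => hca h.symm) _
      rw [h1, h2, tsum_congr h3, tsum_congr h4]
end

section
/- (Proposition 2.1) If α, β : ℕ → A are sequences with p_p(α) = p_p(β) in l^p(A), then α and β are equivalent; that is, the induced map s_p on Lipscomb's quotient space L(A) is injective. -/
open scoped ENNReal
open Filter Topology

namespace SeqEquivAux

/-- The weight function `k ↦ 2^{-(k+1)}`. -/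
noncomputable def g (k : ℕ) : ℝ := (2 : ℝ)⁻¹ ^ (k + 1)

lemma g_pos (k : ℕ) : 0 < g k := by unfold g; positivity

lemma g_nonneg (k : ℕ) : 0 ≤ g k := (g_pos k).le

lemma summable_g : Summable g := by
  have : Summable fun k : ℕ => (2 : ℝ)⁻¹ ^ k :=
    summable_geometric_of_lt_one (by norm_num) (by norm_num)
  exact (summable_nat_add_iff 1).mpr this

lemma ind_le (s : Set ℕ) (m : ℕ) : s.indicator g m ≤ g m := by
  classical
  by_cases hm : m ∈ s <;> simp [Set.indicator_apply, hm, g_nonneg]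

lemma ind_nonneg (s : Set ℕ) (m : ℕ) : 0 ≤ s.indicator g m := by
  classical
  by_cases hm : m ∈ s <;> simp [Set.indicator_apply, hm, g_nonneg]

lemma tail_sum (k : ℕ) : ∑' j : ℕ, g (j + 1 + k) = g k := by
  have h1 : ∀ j : ℕ, g (j + 1 + k) = (2 : ℝ)⁻¹ ^ j * ((2 : ℝ)⁻¹ ^ (k + 2)) := by
    intro j
    unfold g
    rw [← pow_add]
    ring_nf
  rw [tsum_congr h1, tsum_mul_right,
    tsum_geometric_of_lt_one (by norm_num) (by norm_num)]
  unfold g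
  norm_num
  ring

/-- Key forcing lemma: if two subsets of ℕ agree below `k`, `k ∈ s`, `k ∉ t` and the
weighted sums agree, then `s` has nothing above `k` and `t` has everything above `k`. -/
lemma forcing (s t : Set ℕ) (k : ℕ)
    (hpre : ∀ j < k, (j ∈ s ↔ j ∈ t)) (hsk : k ∈ s) (htk : k ∉ t)
    (heq : ∑' m, s.indicator g m = ∑' m, t.indicator g m) :
    (∀ j, k < j → j ∉ s) ∧ (∀ j, k < j → j ∈ t) := by
  classical
  have hs : Summable (s.indicator g) := summable_g.indicator s
  have ht : Summable (t.indicator g) := summable_g.indicator t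
  -- prefix sums agree
  have hprefix : ∑ i ∈ Finset.range k, s.indicator g i
      = ∑ i ∈ Finset.range k, t.indicator g i := by
    refine Finset.sum_congr rfl fun i hi => ?_
    have hik : i < k := Finset.mem_range.mp hi
    by_cases his : i ∈ s
    · have := (hpre i hik).mp his
      simp [Set.indicator_apply, his, this]
    · have : i ∉ t := fun hit => his ((hpre i hik).mpr hit)
      simp [Set.indicator_apply, his, this]
  have hsplit_s := Summable.sum_add_tsum_nat_add (f := s.indicator g) k hs
  have hsplit_t := Summable.sum_add_tsum_nat_add (f := t.indicator g) k ht
  -- equal tails from k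
  have htails : ∑' i, s.indicator g (i + k) = ∑' i, t.indicator g (i + k) := by
    have := heq
    rw [← hsplit_s, ← hsplit_t, hprefix] at this
    linarith
  have hs' : Summable fun i => s.indicator g (i + k) := (summable_nat_add_iff k).mpr hs
  have ht' : Summable fun i => t.indicator g (i + k) := (summable_nat_add_iff k).mpr ht
  have hsplit_s' := Summable.sum_add_tsum_nat_add (f := fun i => s.indicator g (i + k)) 1 hs'
  have hsplit_t' := Summable.sum_add_tsum_nat_add (f := fun i => t.indicator g (i + k)) 1 ht'
  simp only [Finset.range_one, Finset.sum_singleton, Nat.zero_add] at hsplit_s' hsplit_t'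
  have hsk' : s.indicator g k = g k := by simp [Set.indicator_apply, hsk]
  have htk' : t.indicator g k = 0 := by simp [Set.indicator_apply, htk]
  rw [hsk'] at hsplit_s'
  rw [htk', zero_add] at hsplit_t'
  -- R_s and R_t
  set Rs := ∑' i : ℕ, s.indicator g (i + 1 + k) with hRs
  set Rt := ∑' i : ℕ, t.indicator g (i + 1 + k) with hRt
  have hRsnn : 0 ≤ Rs := tsum_nonneg fun i => ind_nonneg s _
  have hgsum : Summable fun i : ℕ => g (i + 1 + k) := by
    have : Summable fun i : ℕ => g (i + (1 + k)) := (summable_nat_add_iff (1 + k)).mpr summable_g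
    simpa [← add_assoc] using this
  have hsS : Summable fun i : ℕ => s.indicator g (i + 1 + k) := by
    have : Summable fun i : ℕ => s.indicator g (i + (1 + k)) :=
      (summable_nat_add_iff (1 + k)).mpr hs
    simpa [← add_assoc] using this
  have htS : Summable fun i : ℕ => t.indicator g (i + 1 + k) := by
    have : Summable fun i : ℕ => t.indicator g (i + (1 + k)) :=
      (summable_nat_add_iff (1 + k)).mpr ht
    simpa [← add_assoc] using this
  have hRt_le : Rt ≤ g k := by
    calc Rt ≤ ∑' i : ℕ, g (i + 1 + k) := Summable.tsum_le_tsum (fun i => ind_le t _) htS hgsum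
    _ = g k := tail_sum k
  -- g k + Rs = tail_s = tail_t = Rt ≤ g k  ⇒ Rs = 0 and Rt = g k
  have hkey : g k + Rs = Rt := by
    linarith [htails, hsplit_s', hsplit_t']
  have hRs0 : Rs = 0 := by linarith
  have hRtgk : Rt = g k := by linarith
  constructor
  · intro j hj hjs
    have hj' : j - k - 1 + 1 + k = j := by omega
    have hpos : 0 < Rs := by
      refine Summable.tsum_pos hsS (fun i => ind_nonneg s _) (j - k - 1) ?_
      rw [hj']
      simp [Set.indicator_apply, hjs, g_pos j]
    linarith
  · intro j hj
    by_contra hjt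
    have hj' : j - k - 1 + 1 + k = j := by omega
    have hlt : Rt < ∑' i : ℕ, g (i + 1 + k) := by
      refine Summable.tsum_lt_tsum (i := j - k - 1) (fun i => ind_le t _) ?_ htS hgsum
      rw [hj']
      simp [Set.indicator_apply, hjt, g_pos j]
    rw [tail_sum k] at hlt
    linarith

/-- Counting lemma: if `s` and `t` agree below `k`, `s` has nothing at or above `k`,
but `t` has some `j ≥ k`, then the weighted sums cannot agree. -/
lemma count (s t : Set ℕ) (k j : ℕ) (hpre : ∀ m < k, (m ∈ s ↔ m ∈ t))
    (hsz : ∀ m, k ≤ m → m ∉ s) (hj : k ≤ j) (hjt : j ∈ t)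
    (heq : ∑' m, s.indicator g m = ∑' m, t.indicator g m) : False := by
  classical
  have hs : Summable (s.indicator g) := summable_g.indicator s
  have ht : Summable (t.indicator g) := summable_g.indicator t
  have hle : ∀ m, s.indicator g m ≤ t.indicator g m := by
    intro m
    rcases lt_or_ge m k with hm | hm
    · by_cases hms : m ∈ s
      · have := (hpre m hm).mp hms
        simp [Set.indicator_apply, hms, this]
      · have : m ∉ t ∨ m ∈ t := by tauto
        by_cases hmt : m ∈ t
        · simp [Set.indicator_apply, hms, hmt, g_nonneg]
        · simp [Set.indicator_apply, hms, hmt]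
    · have := hsz m hm
      simp only [Set.indicator_apply, this, if_false]
      exact ind_nonneg t m
  have hstrict : s.indicator g j < t.indicator g j := by
    have := hsz j hj
    simp [Set.indicator_apply, this, hjt, g_pos j]
  exact absurd heq (Summable.tsum_lt_tsum hle hstrict hs ht).ne

end SeqEquivAux

open SeqEquivAux in
/-- Proposition 2.1. If `p_p(α) = p_p(β)` in `l^p(A)` then `α` and `β`
are equivalent; i.e. the induced map `s_p` on Lipscomb's space `L(A)` is injective. -/
theorem seqEquiv_of_pFun_eq {A : Type*} [Infinite A] (z : A) (p : ℝ) (hp : 1 ≤ p)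
    (α β : ℕ → A) (h : pFun z α = pFun z β) :
    SeqEquiv α β := by
  classical
  by_cases hab : α = β
  · exact Or.inl hab
  right
  have hne : ∃ k, α k ≠ β k := Function.ne_iff.mp hab
  set k := Nat.find hne with hkdef
  have hk : α k ≠ β k := Nat.find_spec hne
  have hpre : ∀ j < k, α j = β j := fun j hj => not_not.mp (Nat.find_min hne hj)
  -- mass equality at every c ≠ z, in indicator form
  have hμ : ∀ c, c ≠ z →
      ∑' m, Set.indicator {m | α m = c} g m = ∑' m, Set.indicator {m | β m = c} g m := by
    intro c hc
    have h1 : pFun z α ⟨c, hc⟩ = ∑' m, Set.indicator {m | α m = c} g m :=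
      tsum_subtype {m | α m = c} g
    have h2 : pFun z β ⟨c, hc⟩ = ∑' m, Set.indicator {m | β m = c} g m :=
      tsum_subtype {m | β m = c} g
    rw [← h1, ← h2, h]
  have hpreiff : ∀ c, ∀ j < k, (j ∈ {m | α m = c} ↔ j ∈ {m | β m = c}) := by
    intro c j hj
    simp [Set.mem_setOf_eq, hpre j hj]
  by_cases ha : α k ≠ z
  · -- forcing at a = α k
    obtain ⟨h1, h2⟩ := forcing {m | α m = α k} {m | β m = α k} k (hpreiff (α k))
      rfl (fun hmem => hk (Set.mem_setOf_eq ▸ hmem).symm) (hμ (α k) ha)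
    -- h1 : ∀ j > k, α j ≠ α k ; h2 : ∀ j > k, β j = α k
    by_cases hb : β k ≠ z
    · obtain ⟨h3, h4⟩ := forcing {m | β m = β k} {m | α m = β k} k
        (fun j hj => (hpreiff (β k) j hj).symm) rfl hk ((hμ (β k) hb).symm)
      exact ⟨k, α k, β k, hk, hpre, rfl, fun j hj => h4 j hj, rfl, fun j hj => h2 j hj⟩
    · push_neg at hb
      refine ⟨k, α k, β k, hk, hpre, rfl, ?_, rfl, fun j hj => h2 j hj⟩
      intro j hj
      by_contra hc
      refine count {m | β m = α j} {m | α m = α j} k j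
        (fun m hm => (hpreiff (α j) m hm).symm) ?_ hj.le rfl
        ((hμ (α j) (hb ▸ hc)).symm)
      intro m hm hmem
      have hmem' : β m = α j := hmem
      rcases eq_or_lt_of_le hm with hm' | hm'
      · rw [← hm'] at hmem'
        exact hc hmem'.symm
      · have hbm : β m = α k := h2 m hm'
        rw [hmem'] at hbm
        exact h1 j hj hbm
  · -- a = z, so b = β k ≠ z
    push_neg at ha
    have hb : β k ≠ z := fun hbz => hk (by rw [ha, hbz])
    obtain ⟨h3, h4⟩ := forcing {m | β m = β k} {m | α m = β k} k
      (fun j hj => (hpreiff (β k) j hj).symm) rfl hk ((hμ (β k) hb).symm)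
    -- h3 : ∀ j > k, β j ≠ β k ; h4 : ∀ j > k, α j = β k
    refine ⟨k, α k, β k, hk, hpre, rfl, fun j hj => h4 j hj, rfl, ?_⟩
    intro j hj
    by_contra hc
    rw [ha] at hc
    refine count {m | α m = β j} {m | β m = β j} k j (hpreiff (β j)) ?_ hj.le rfl
      (hμ (β j) hc)
    intro m hm hmem
    have hmem' : α m = β j := hmem
    rcases eq_or_lt_of_le hm with hm' | hm'
    · rw [← hm', ha] at hmem'
      exact hc hmem'.symm
    · have ham : α m = β k := h4 m hm'
      rw [hmem'] at ham
      exact h3 j hj ham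
end

section
/- The map F_S sending a nonempty bounded closed set B ⊆ X to closure(⋃_{i ∈ I} f_i(B)) is well defined on nonempty bounded closed subsets and is Lipschitz with constant at most c with respect to the Hausdorff distance: for all nonempty bounded closed B, C ⊆ X, h(closure(⋃_{i∈I} f_i(B)), closure(⋃_{i∈I} f_i(C))) ≤ c · h(B, C). -/
open scoped ENNReal NNReal

/-!
Each point `f i b` of `⋃ i, f i '' B` lies, by the `c`-Lipschitz property of `f i`, within
`c · d(b, C) ≤ c · h(B, C)` of `f i '' C ⊆ ⋃ j, f j '' C`, and symmetrically. This bounds the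
Hausdorff edistance of the unions by `c · h(B, C)`, which is finite for nonempty bounded `B, C`;
taking closures does not change Hausdorff distances.
-/

namespace Metric

variable {α β ι : Type*}

section PseudoEMetric

variable [PseudoEMetricSpace α] [PseudoEMetricSpace β] {c : ℝ≥0}

theorem infEDist_image_le_of_lipschitzWith {g : α → β} (hg : LipschitzWith c g) (x : α)
    {s : Set α} (hs : s.Nonempty) : infEDist (g x) (g '' s) ≤ c * infEDist x s := by
  have : Nonempty s := hs.to_subtype
  rw [show infEDist x s = ⨅ y : s, edist x y by rw [infEDist, iInf_subtype'],
    ENNReal.mul_iInf (by simp)]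
  refine le_iInf fun y => ?_
  calc infEDist (g x) (g '' s) ≤ edist (g x) (g y) :=
        infEDist_le_edist_of_mem (Set.mem_image_of_mem _ y.2)
    _ ≤ c * edist x y := hg x y

theorem infEDist_iUnion_image_le {f : ι → α → β} (hf : ∀ i, LipschitzWith c (f i))
    {s t : Set α} (ht : t.Nonempty) {x : α} (hx : x ∈ s) (i : ι) :
    infEDist (f i x) (⋃ j, f j '' t) ≤ c * hausdorffEDist s t :=
  calc infEDist (f i x) (⋃ j, f j '' t)
      ≤ infEDist (f i x) (f i '' t) := infEDist_anti (Set.subset_iUnion (fun j => f j '' t) i)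
    _ ≤ c * infEDist x t := infEDist_image_le_of_lipschitzWith (hf i) x ht
    _ ≤ c * hausdorffEDist s t := by gcongr; exact infEDist_le_hausdorffEDist_of_mem hx

theorem hausdorffEDist_iUnion_image_le {f : ι → α → β} (hf : ∀ i, LipschitzWith c (f i))
    {s t : Set α} (hs : s.Nonempty) (ht : t.Nonempty) :
    hausdorffEDist (⋃ i, f i '' s) (⋃ i, f i '' t) ≤ c * hausdorffEDist s t := by
  refine hausdorffEDist_le_of_infEDist ?_ ?_ <;> simp only [Set.mem_iUnion, Set.mem_image]
  · rintro _ ⟨i, x, hx, rfl⟩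
    exact infEDist_iUnion_image_le hf ht hx i
  · rintro _ ⟨i, x, hx, rfl⟩
    rw [hausdorffEDist_comm]
    exact infEDist_iUnion_image_le hf hs hx i

end PseudoEMetric

theorem hausdorffDist_iUnion_image_le [PseudoMetricSpace α] [PseudoMetricSpace β] {c : ℝ≥0}
    {f : ι → α → β} (hf : ∀ i, LipschitzWith c (f i)) {s t : Set α} (hs : s.Nonempty)
    (ht : t.Nonempty) (hs' : Bornology.IsBounded s) (ht' : Bornology.IsBounded t) :
    hausdorffDist (⋃ i, f i '' s) (⋃ i, f i '' t) ≤ c * hausdorffDist s t := by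
  have hfin : hausdorffEDist s t ≠ ⊤ := hausdorffEDist_ne_top_of_nonempty_of_bounded hs ht hs' ht'
  rw [hausdorffDist, hausdorffDist, ← ENNReal.coe_toReal c, ← ENNReal.toReal_mul]
  exact ENNReal.toReal_mono (by finiteness) (hausdorffEDist_iUnion_image_le hf hs ht)

end Metric

theorem iifs_map_wellDefined_and_lipschitz_general {X : Type*} [MetricSpace X]
    {I : Type*} [Nonempty I] (f : I → X → X) (c : ℝ≥0)
    (hlip : ∀ i : I, LipschitzWith c (f i))
    (hbdd : ∀ B : Set X, Bornology.IsBounded B → Bornology.IsBounded (⋃ i : I, f i '' B)) :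
    (∀ B : Set X, B.Nonempty → Bornology.IsBounded B → IsClosed B →
      (closure (⋃ i : I, f i '' B)).Nonempty ∧
        Bornology.IsBounded (closure (⋃ i : I, f i '' B)) ∧
        IsClosed (closure (⋃ i : I, f i '' B))) ∧
    (∀ B C : Set X, B.Nonempty → Bornology.IsBounded B → IsClosed B →
      C.Nonempty → Bornology.IsBounded C → IsClosed C →
      Metric.hausdorffDist (closure (⋃ i : I, f i '' B)) (closure (⋃ i : I, f i '' C)) ≤
        (c : ℝ) * Metric.hausdorffDist B C) := by
  refine ⟨fun B hB hB' _ => ⟨?_, (hbdd B hB').closure, isClosed_closure⟩,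
    fun B C hB hB' _ hC hC' _ => ?_⟩
  · exact (Set.nonempty_iUnion.2 ⟨Classical.arbitrary I, hB.image _⟩).closure
  · rw [Metric.hausdorffDist_closure]
    exact Metric.hausdorffDist_iUnion_image_le hlip hB hC hB' hC'

/-- For an IIFS `(f_i)_{i ∈ I}` on a complete metric space `X`, the map
`B ↦ closure (⋃ i, f_i '' B)` is well defined on nonempty bounded closed subsets of `X`
and is Lipschitz with constant at most `c` for the Hausdorff distance. -/
theorem iifs_map_wellDefined_and_lipschitz {X : Type*} [MetricSpace X] [CompleteSpace X]
    {I : Type*} [Nonempty I] (f : I → X → X) (c : ℝ≥0) (hc : c < 1)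
    (hlip : ∀ i : I, LipschitzWith c (f i))
    (hbdd : ∀ B : Set X, Bornology.IsBounded B → Bornology.IsBounded (⋃ i : I, f i '' B)) :
    (∀ B : Set X, B.Nonempty → Bornology.IsBounded B → IsClosed B →
      (closure (⋃ i : I, f i '' B)).Nonempty ∧
        Bornology.IsBounded (closure (⋃ i : I, f i '' B)) ∧
        IsClosed (closure (⋃ i : I, f i '' B))) ∧
    (∀ B C : Set X, B.Nonempty → Bornology.IsBounded B → IsClosed B →
      C.Nonempty → Bornology.IsBounded C → IsClosed C →
      Metric.hausdorffDist (closure (⋃ i : I, f i '' B)) (closure (⋃ i : I, f i '' C)) ≤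
        (c : ℝ) * Metric.hausdorffDist B C) :=
  iifs_map_wellDefined_and_lipschitz_general f c hlip hbdd
end

section
/- (Theorem 2.2) Given a nonempty complete metric space (X, d) and an IIFS (f_i)_{i∈I} on X, there exists a unique nonempty bounded closed subset A(S) of X such that closure(⋃_{i∈I} f_i(A(S))) = A(S). -/
/-! The Hutchinson operator `S ↦ closure (⋃ i, f i '' S)` is a `c`-contraction of the complete
space of closed subsets of `X` with the Hausdorff extended distance. Nonempty bounded closed sets
are exactly those at finite distance from a singleton, so Banach's fixed point theorem started at
a singleton yields the attractor, and two nonempty bounded fixed points are at finite distance,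
hence equal. -/

open scoped ENNReal NNReal
open Metric Set TopologicalSpace

section HausdorffEDist

variable {X Y : Type*} [PseudoEMetricSpace X] [PseudoEMetricSpace Y] {K : ℝ≥0}

-- `K ≠ 0` is needed: for `t = ∅` the right-hand side is `0 * ∞ = 0`.
theorem LipschitzWith.infEDist_image_le {f : X → Y} (hf : LipschitzWith K f) (hK : K ≠ 0)
    (x : X) (t : Set X) : infEDist (f x) (f '' t) ≤ K * infEDist x t := by
  have hK' : (K : ℝ≥0∞) ≠ 0 := by exact_mod_cast hK
  rw [infEDist, infEDist, iInf_image, ENNReal.mul_iInf_of_ne hK' ENNReal.coe_ne_top]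
  refine iInf_mono fun y => ?_
  rw [ENNReal.mul_iInf_of_ne hK' ENNReal.coe_ne_top]
  exact iInf_mono fun _ => hf x y

theorem LipschitzWith.hausdorffEDist_image_le {f : X → Y} (hf : LipschitzWith K f) (hK : K ≠ 0)
    (s t : Set X) : hausdorffEDist (f '' s) (f '' t) ≤ K * hausdorffEDist s t := by
  have key : ∀ s t : Set X, ∀ y ∈ f '' s, infEDist y (f '' t) ≤ K * hausdorffEDist s t := by
    rintro s t _ ⟨x, hx, rfl⟩
    exact (hf.infEDist_image_le hK x t).trans
      (mul_le_mul_right (infEDist_le_hausdorffEDist_of_mem hx) _)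
  exact hausdorffEDist_le_of_infEDist (key s t) fun y hy =>
    hausdorffEDist_comm (s := s) ▸ key t s y hy

theorem hausdorffEDist_iUnion_image_le {ι : Type*} {f : ι → X → Y}
    (hf : ∀ i, LipschitzWith K (f i)) (hK : K ≠ 0) (s t : Set X) :
    hausdorffEDist (⋃ i, f i '' s) (⋃ i, f i '' t) ≤ K * hausdorffEDist s t :=
  hausdorffEDist_iUnion_le.trans (iSup_le fun i => (hf i).hausdorffEDist_image_le hK s t)

end HausdorffEDist

theorem Bornology.IsBounded.of_hausdorffEDist_ne_top {X : Type*} [PseudoMetricSpace X]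
    {s t : Set X} (hs : IsBounded s) (h : hausdorffEDist s t ≠ ⊤) : IsBounded t := by
  refine (hs.thickening (δ := hausdorffDist s t + 1)).subset fun y hy => ?_
  obtain ⟨x, hx, hxy⟩ := exists_dist_lt_of_hausdorffDist_lt' hy (lt_add_one _) h
  exact mem_thickening_iff.2 ⟨x, hx, dist_comm x y ▸ hxy⟩

section Hutchinson

variable {X ι : Type*} [EMetricSpace X]

def hutchinson (f : ι → X → X) (S : Closeds X) : Closeds X :=
  ⟨closure (⋃ i, f i '' S), isClosed_closure⟩

theorem contractingWith_hutchinson {f : ι → X → X} {K : ℝ≥0} (hK : K < 1) (hK0 : K ≠ 0)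
    (hf : ∀ i, LipschitzWith K (f i)) : ContractingWith K (hutchinson f) := by
  refine ⟨hK, fun S T => ?_⟩
  simp only [Closeds.edist_eq, hutchinson, Closeds.coe_mk, hausdorffEDist_closure]
  exact hausdorffEDist_iUnion_image_le hf hK0 S T

end Hutchinson

/-- Theorem 2.2. Every IIFS `(f_i)_{i ∈ I}` on a nonempty complete metric
space `X` has a unique attractor: a nonempty bounded closed set `Att ⊆ X` with
`closure (⋃ i, f_i '' Att) = Att`. -/
theorem iifs_attractor_existsUnique {X : Type*} [MetricSpace X] [CompleteSpace X] [Nonempty X]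
    {I : Type*} [Nonempty I] (f : I → X → X) (c : ℝ≥0) (hc : c < 1)
    (hlip : ∀ i : I, LipschitzWith c (f i))
    (hbdd : ∀ B : Set X, Bornology.IsBounded B → Bornology.IsBounded (⋃ i : I, f i '' B)) :
    ∃! Att : Set X, Att.Nonempty ∧ Bornology.IsBounded Att ∧ IsClosed Att ∧
      closure (⋃ i : I, f i '' Att) = Att := by
  have hT : ContractingWith (max c 2⁻¹) (hutchinson f) :=
    contractingWith_hutchinson (max_lt hc (by norm_num)) (by positivity)
      fun i => (hlip i).weaken (le_max_left _ _)
  obtain ⟨x₀⟩ := ‹Nonempty X›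
  obtain ⟨i₀⟩ := ‹Nonempty I›
  let S₀ : Closeds X := ⟨{x₀}, isClosed_singleton⟩
  have hTS₀ne : (hutchinson f S₀ : Set X).Nonempty :=
    ⟨f i₀ x₀, subset_closure (mem_iUnion_of_mem i₀ (mem_image_of_mem _ rfl))⟩
  have hS₀ : edist S₀ (hutchinson f S₀) ≠ ⊤ :=
    hausdorffEDist_ne_top_of_nonempty_of_bounded (singleton_nonempty x₀) hTS₀ne
      Bornology.isBounded_singleton (hbdd _ Bornology.isBounded_singleton).closure
  set A := hT.efixedPoint _ S₀ hS₀
  have hAfix : hutchinson f A = A := hT.efixedPoint_isFixedPt hS₀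
  have hS₀A : hausdorffEDist {x₀} (A : Set X) ≠ ⊤ := (hT.edist_efixedPoint_lt_top hS₀).ne
  have hAne : (A : Set X).Nonempty :=
    nonempty_of_hausdorffEDist_ne_top (singleton_nonempty x₀) hS₀A
  have hAbdd : Bornology.IsBounded (A : Set X) :=
    Bornology.isBounded_singleton.of_hausdorffEDist_ne_top hS₀A
  refine ⟨A, ⟨hAne, hAbdd, A.isClosed, congrArg SetLike.coe hAfix⟩, ?_⟩
  rintro B ⟨hBne, hBbdd, hBcl, hBfix⟩
  have hBfix' : hutchinson f ⟨B, hBcl⟩ = ⟨B, hBcl⟩ := Closeds.ext hBfix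
  have hBA : edist (⟨B, hBcl⟩ : Closeds X) A ≠ ⊤ :=
    hausdorffEDist_ne_top_of_nonempty_of_bounded hBne hAne hBbdd hAbdd
  exact congrArg SetLike.coe
    ((hT.eq_or_edist_eq_top_of_fixedPoints hBfix' hAfix).resolve_right hBA)
end

section
/- (Theorem 2.3, first part) Let A(S) be the attractor of an IIFS (f_i)_{i∈I} on a nonempty complete metric space X. Then for every infinite word ω : ℕ → I, the intersection ⋂_{m ≥ 1} closure(f_{ω(0)} ∘ f_{ω(1)} ∘ ⋯ ∘ f_{ω(m-1)}(A(S))) consists of exactly one point a_ω, and for every a ∈ A(S) the sequence m ↦ (f_{ω(0)} ∘ f_{ω(1)} ∘ ⋯ ∘ f_{ω(m-1)})(a) converges to a_ω. -/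
open scoped ENNReal NNReal
open Filter Topology

/-- `iterComp f ω m = f_{ω 0} ∘ f_{ω 1} ∘ ⋯ ∘ f_{ω (m-1)}`. -/
def iterComp {X : Type*} {I : Type*} (f : I → X → X) (ω : ℕ → I) : ℕ → X → X
  | 0 => id
  | m + 1 => iterComp f ω m ∘ f (ω m)

/-!
The sets `f_{[ω]_m}(A)` are nested because `A` is invariant under every `f i`, and `f_{[ω]_m}` is
`c ^ m`-Lipschitz, so their diameters are at most `c ^ m · diam A → 0`. In a complete space such a
nested family has closures meeting in exactly one point, and any choice of points `x_m` in the
`m`-th set, e.g. `x_m = f_{[ω]_m}(a)`, converges to it.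
-/

open Metric Set

namespace Metric

section PseudoMetricSpace

variable {X : Type*} [PseudoMetricSpace X] {s : ℕ → Set X}

theorem exists_forall_mem_closure_of_antitone [CompleteSpace X] (hanti : Antitone s)
    (hne : ∀ n, (s n).Nonempty) (hb : ∀ n, Bornology.IsBounded (s n))
    (hdiam : Tendsto (fun n => diam (s n)) atTop (𝓝 0)) :
    ∃ x, ∀ n, x ∈ closure (s n) := by
  have hfinite : ∀ N, (⋂ n ≤ N, closure (s n)).Nonempty := fun N =>
    (hne N).closure.mono (subset_iInter₂ fun _ hn => closure_mono (hanti hn))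
  obtain ⟨x, hx⟩ := nonempty_iInter_of_nonempty_biInter (fun _ => isClosed_closure)
    (fun n => (hb n).closure) hfinite (by simpa only [diam_closure] using hdiam)
  exact ⟨x, mem_iInter.1 hx⟩

theorem dist_le_diam_of_mem_closure {t : Set X} {x y : X} (ht : Bornology.IsBounded t)
    (hx : x ∈ closure t) (hy : y ∈ closure t) : dist x y ≤ diam t :=
  diam_closure t ▸ dist_le_diam_of_mem ht.closure hx hy

theorem tendsto_of_forall_mem_of_diam_tendsto_zero {x : X} {u : ℕ → X}
    (hb : ∀ n, Bornology.IsBounded (s n)) (hdiam : Tendsto (fun n => diam (s n)) atTop (𝓝 0))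
    (hx : ∀ n, x ∈ closure (s n)) (hu : ∀ n, u n ∈ s n) : Tendsto u atTop (𝓝 x) :=
  tendsto_iff_dist_tendsto_zero.2 <| squeeze_zero (fun _ => dist_nonneg)
    (fun n => dist_le_diam_of_mem_closure (hb n) (subset_closure (hu n)) (hx n)) hdiam

end PseudoMetricSpace

theorem biInter_Ici_closure_eq_singleton {X : Type*} [MetricSpace X] {s : ℕ → Set X} {x : X}
    (hb : ∀ n, Bornology.IsBounded (s n)) (hdiam : Tendsto (fun n => diam (s n)) atTop (𝓝 0))
    (hx : ∀ n, x ∈ closure (s n)) (k : ℕ) : ⋂ n ∈ Ici k, closure (s n) = {x} := by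
  refine Subset.antisymm (fun y hy => ?_) (singleton_subset_iff.2 (mem_iInter₂.2 fun n _ => hx n))
  have hle : ∀ n ≥ k, dist y x ≤ diam (s n) := fun n hn =>
    dist_le_diam_of_mem_closure (hb n) (mem_iInter₂.1 hy n hn) (hx n)
  exact dist_le_zero.1 (ge_of_tendsto hdiam (eventually_atTop.2 ⟨k, hle⟩))

end Metric

section IteratedFunctionSystem

variable {X I : Type*} {f : I → X → X}

theorem mapsTo_of_closure_iUnion_image_eq [TopologicalSpace X] {A : Set X}
    (hA : closure (⋃ i, f i '' A) = A) (i : I) : MapsTo (f i) A A := by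
  intro a ha
  rw [← hA]
  exact subset_closure (mem_iUnion_of_mem i (mem_image_of_mem (f i) ha))

theorem antitone_iterComp_image {A : Set X} (hA : ∀ i, MapsTo (f i) A A) (ω : ℕ → I) :
    Antitone fun m => iterComp f ω m '' A :=
  antitone_nat_of_succ_le fun m => by
    simp only [iterComp, image_comp]
    exact image_mono (hA (ω m)).image_subset

variable {c : ℝ≥0}

theorem lipschitzWith_iterComp [PseudoEMetricSpace X] (hlip : ∀ i, LipschitzWith c (f i))
    (ω : ℕ → I) (m : ℕ) :
    LipschitzWith (c ^ m) (iterComp f ω m) := by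
  induction m with
  | zero => exact LipschitzWith.id
  | succ m ih => rw [pow_succ]; exact ih.comp (hlip (ω m))

theorem tendsto_diam_iterComp_image [PseudoMetricSpace X] (hc : c < 1)
    (hlip : ∀ i, LipschitzWith c (f i)) (ω : ℕ → I) {A : Set X} (hA : Bornology.IsBounded A) :
    Tendsto (fun m => diam (iterComp f ω m '' A)) atTop (𝓝 0) := by
  have hpow : Tendsto (fun m => (c : ℝ) ^ m * diam A) atTop (𝓝 0) := by
    simpa only [zero_mul] using
      (tendsto_pow_atTop_nhds_zero_of_lt_one c.coe_nonneg hc).mul_const (diam A)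
  refine squeeze_zero (fun _ => diam_nonneg) (fun m => ?_) hpow
  exact_mod_cast (lipschitzWith_iterComp hlip ω m).diam_image_le A hA

end IteratedFunctionSystem

theorem iifs_word_intersection_singleton_general {X : Type*} [MetricSpace X] [CompleteSpace X]
    {I : Type*} (f : I → X → X) (c : ℝ≥0) (hc : c < 1)
    (hlip : ∀ i : I, LipschitzWith c (f i))
    (Att : Set X)
    (hAtt : Att.Nonempty ∧ Bornology.IsBounded Att ∧ IsClosed Att ∧
      closure (⋃ i : I, f i '' Att) = Att)
    (ω : ℕ → I) :
    ∃ aω : X, (⋂ m ∈ Set.Ici 1, closure (iterComp f ω m '' Att)) = {aω} ∧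
      ∀ a ∈ Att, Tendsto (fun m : ℕ => iterComp f ω m a) atTop (𝓝 aω) := by
  obtain ⟨hne, hbdd, -, hfix⟩ := hAtt
  have hb (m : ℕ) : Bornology.IsBounded (iterComp f ω m '' Att) :=
    (lipschitzWith_iterComp hlip ω m).isBounded_image hbdd
  have hdiam := tendsto_diam_iterComp_image hc hlip ω hbdd
  obtain ⟨aω, haω⟩ := exists_forall_mem_closure_of_antitone
    (antitone_iterComp_image (mapsTo_of_closure_iUnion_image_eq hfix) ω)
    (fun m => hne.image _) hb hdiam
  exact ⟨aω, biInter_Ici_closure_eq_singleton hb hdiam haω 1,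
    fun a ha => tendsto_of_forall_mem_of_diam_tendsto_zero hb hdiam haω
      fun m => mem_image_of_mem _ ha⟩

/-- Theorem 2.3, first part. For the attractor `Att` of an IIFS and any
infinite word `ω : ℕ → I`, the set `⋂_{m ≥ 1} closure (f_{[ω]_m} '' Att)` is a singleton
`{aω}`, and for every `a ∈ Att` the sequence `m ↦ f_{[ω]_m} a` converges to `aω`. -/
theorem iifs_word_intersection_singleton {X : Type*} [MetricSpace X] [CompleteSpace X]
    {I : Type*} [Nonempty I] (f : I → X → X) (c : ℝ≥0) (hc : c < 1)
    (hlip : ∀ i : I, LipschitzWith c (f i))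
    (hbdd : ∀ B : Set X, Bornology.IsBounded B → Bornology.IsBounded (⋃ i : I, f i '' B))
    (Att : Set X)
    (hAtt : Att.Nonempty ∧ Bornology.IsBounded Att ∧ IsClosed Att ∧
      closure (⋃ i : I, f i '' Att) = Att)
    (ω : ℕ → I) :
    ∃ aω : X, (⋂ m ∈ Set.Ici 1, closure (iterComp f ω m '' Att)) = {aω} ∧
      ∀ a ∈ Att, Tendsto (fun m : ℕ => iterComp f ω m a) atTop (𝓝 aω) :=
  iifs_word_intersection_singleton_general f c hc hlip Att hAtt ω
end

section
/- (Theorem 2.4, first part) For every real p ≥ 1, the set ω_p^A = p_p(N(A)) is a nonempty closed bounded subset of l^p(A) and satisfies closure(⋃_{a∈A} f_a(ω_p^A)) = ω_p^A; that is, ω_p^A is the attractor of the infinite iterated function system (l^p(A), (f_a)_{a∈A}). -/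
open scoped ENNReal
open Filter Topology

lemma summable_base : Summable (fun k : ℕ => (2 : ℝ)⁻¹ ^ (k + 1)) := by
  apply Summable.comp_injective (summable_geometric_of_lt_one (by norm_num) (by norm_num))
    (add_left_injective 1)

lemma tsum_base : ∑' k : ℕ, (2 : ℝ)⁻¹ ^ (k + 1) = 1 := by
  have h : ∀ k : ℕ, (2 : ℝ)⁻¹ ^ (k + 1) = 2⁻¹ * 2⁻¹ ^ k := fun k => by ring
  rw [tsum_congr h, tsum_mul_left, tsum_geometric_of_lt_one (by norm_num) (by norm_num)]
  norm_num

lemma pFun_nonneg {A : Type*} (z : A) (α : ℕ → A) (b : {b : A // b ≠ z}) :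
    0 ≤ pFun z α b :=
  tsum_nonneg fun k => by positivity

lemma pFun_eq_indicator {A : Type*} (z : A) (α : ℕ → A) (b : {b : A // b ≠ z}) :
    pFun z α b =
      ∑' k : ℕ, Set.indicator {k : ℕ | α k = (b : A)} (fun k => (2 : ℝ)⁻¹ ^ (k + 1)) k := by
  unfold pFun
  exact tsum_subtype {k : ℕ | α k = (b : A)} (fun k => (2 : ℝ)⁻¹ ^ (k + 1))

lemma summable_pFun {A : Type*} (z : A) (α : ℕ → A) : Summable (pFun z α) := by
  classical
  apply summable_of_sum_le (c := 1) (pFun_nonneg z α)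
  intro s
  have hind : ∀ b : {b : A // b ≠ z},
      Summable (Set.indicator {k : ℕ | α k = (b : A)} (fun k => (2 : ℝ)⁻¹ ^ (k + 1))) :=
    fun b => summable_base.indicator _
  have h1 : ∑ b ∈ s, pFun z α b
      = ∑' k : ℕ, ∑ b ∈ s, Set.indicator {k : ℕ | α k = (b : A)}
          (fun k => (2 : ℝ)⁻¹ ^ (k + 1)) k := by
    rw [Finset.sum_congr rfl fun b _ => pFun_eq_indicator z α b]
    exact (Summable.tsum_finsetSum fun b _ => hind b).symm
  have hle : ∀ k : ℕ, ∑ b ∈ s, Set.indicator {k : ℕ | α k = (b : A)}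
      (fun k => (2 : ℝ)⁻¹ ^ (k + 1)) k ≤ (2 : ℝ)⁻¹ ^ (k + 1) := by
    intro k
    by_cases hz : α k = z
    · have : ∀ b ∈ s, Set.indicator {k : ℕ | α k = (b : A)}
          (fun k => (2 : ℝ)⁻¹ ^ (k + 1)) k = 0 := by
        intro b _
        apply Set.indicator_of_notMem
        simp only [Set.mem_setOf_eq, hz]
        exact fun h => b.2 h.symm
      rw [Finset.sum_congr rfl this, Finset.sum_const, smul_zero]
      positivity
    · have hb : ∀ b ∈ s, Set.indicator {k : ℕ | α k = (b : A)}
          (fun k => (2 : ℝ)⁻¹ ^ (k + 1)) k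
          = if b = (⟨α k, hz⟩ : {b : A // b ≠ z}) then (2 : ℝ)⁻¹ ^ (k + 1) else 0 := by
        intro b _
        rw [Set.indicator_apply]
        congr 1
        simp only [Set.mem_setOf_eq, eq_comm (a := α k)]
        rw [Subtype.ext_iff]
      rw [Finset.sum_congr rfl hb, Finset.sum_ite_eq' s _ (fun _ => (2 : ℝ)⁻¹ ^ (k + 1))]
      split_ifs
      · exact le_rfl
      · positivity
  have hnn : ∀ k : ℕ, 0 ≤ ∑ b ∈ s, Set.indicator {k : ℕ | α k = (b : A)}
      (fun k => (2 : ℝ)⁻¹ ^ (k + 1)) k := by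
    intro k
    apply Finset.sum_nonneg
    intro b _
    exact Set.indicator_nonneg (fun k _ => by positivity) k
  rw [h1, ← tsum_base]
  exact Summable.tsum_le_tsum hle (Summable.of_nonneg_of_le hnn hle summable_base) summable_base

lemma pFun_memℓp {A : Type*} (z : A) (α : ℕ → A) {P : ℝ≥0∞} (hP : 1 ≤ P) :
    Memℓp (pFun z α) P := by
  apply Memℓp.of_exponent_ge (q := 1) _ hP
  apply memℓp_gen
  simp only [ENNReal.toReal_one, Real.rpow_one]
  apply Summable.congr (summable_pFun z α)
  intro b
  rw [Real.norm_of_nonneg (pFun_nonneg z α b)]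

/-- The map `p_p : N(A) → l^p(A)`, sending `α` to the element of `l^p(A)` with
coordinates `p_p(α)(b) = ∑_{k ∈ ℕ, α k = b} 2^{-(k+1)}`. -/
noncomputable def pp {A : Type*} (z : A) (α : ℕ → A) (P : ℝ≥0∞) [Fact (1 ≤ P)] :
    lp (fun _ : {b : A // b ≠ z} => ℝ) P :=
  ⟨pFun z α, pFun_memℓp z α Fact.out⟩

/-- The element `u_a` of `l^p(A)`: `u_z = 0` and, for `a ≠ z`, `u_a` is the indicator
function of `{a}` on `A' = A \ {z}`. -/
noncomputable def uElem {A : Type*} (z : A) (P : ℝ≥0∞) (a : A) :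
    lp (fun _ : {b : A // b ≠ z} => ℝ) P :=
  letI := Classical.decEq A
  letI := Classical.decEq {b : A // b ≠ z}
  if h : a = z then 0 else lp.single P ⟨a, h⟩ 1

/-- The map `f_a : l^p(A) → l^p(A)`, `f_a(x) = (x + u_a)/2`. -/
noncomputable def fMap {A : Type*} (z : A) (P : ℝ≥0∞) (a : A)
    (x : lp (fun _ : {b : A // b ≠ z} => ℝ) P) : lp (fun _ : {b : A // b ≠ z} => ℝ) P :=
  (2 : ℝ)⁻¹ • (x + uElem z P a)

/-! The identity `p_p(α) = f_{α 0}(p_p(α ∘ succ))` makes `ω = p_p(N(A))` invariant under the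
system, and `‖p_p(α)‖_p ≤ ‖p_p(α)‖_1 ≤ 1`. For closedness, let `p_p(βₙ) → x`. The coordinates of
`x` tend to zero, while `p_p(βₙ)` has a coordinate `≥ 1/2` at `βₙ 0`; hence some head `a` recurs
infinitely often, and `x = f_a(y)` with `y = lim (2 p_p(βₙ) - u_a)` again in the closure of `ω`.
Iterating yields an address `α` with `‖x - p_p(α)‖ ≤ 2⁻ᵐ · diam` for every `m`, the `f_a` being
`1/2`-contractions. -/

open Set Metric Bornology
open scoped NNReal

section IteratedFunctionSystem

variable {X ι : Type*} {f : ι → X → X} {π : (ℕ → ι) → X}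

theorem iUnion_image_range_eq_range (hπ : ∀ α, π α = f (α 0) (π fun n => α (n + 1))) :
    ⋃ i, f i '' range π = range π := by
  refine Subset.antisymm ?_ fun x ⟨α, hα⟩ =>
    mem_iUnion.2 ⟨α 0, _, mem_range_self _, hα ▸ (hπ α).symm⟩
  rintro _ ⟨_, ⟨i, rfl⟩, _, ⟨β, rfl⟩, rfl⟩
  exact ⟨fun n => Nat.casesOn n i β, hπ _⟩

theorem subset_range_of_subset_iUnion_image [MetricSpace X] {K : ℝ≥0} (hK : K < 1)
    (hf : ∀ i, LipschitzWith K (f i)) (hπ : ∀ α, π α = f (α 0) (π fun n => α (n + 1)))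
    (hπb : IsBounded (range π)) {C : Set X} (hC : IsBounded C) (hCf : C ⊆ ⋃ i, f i '' C) :
    C ⊆ range π := by
  obtain ⟨D, hD⟩ := isBounded_iff.1 (hC.union hπb)
  have hstep : ∀ x : C, ∃ (i : ι) (y : C), (x : X) = f i y := fun ⟨x, hx⟩ => by
    obtain ⟨i, y, hy, rfl⟩ := mem_iUnion.1 (hCf hx)
    exact ⟨i, ⟨y, hy⟩, rfl⟩
  choose label next hnext using hstep
  intro x hx
  set c : ℕ → C := fun n => next^[n] ⟨x, hx⟩
  set α : ℕ → ι := fun n => label (c n)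
  have hc : ∀ n, (c n : X) = f (α n) (c (n + 1)) := fun n => by
    simp only [c, α, Function.iterate_succ_apply']
    exact hnext _
  have hshift : ∀ m n, dist (c n : X) (π fun k => α (k + n)) ≤ K ^ m * D := by
    intro m
    induction m with
    | zero => exact fun n => by simpa using hD (Or.inl (c n).2) (Or.inr (mem_range_self _))
    | succ m ih =>
      intro n
      calc dist (c n : X) (π fun k => α (k + n))
          = dist (f (α n) (c (n + 1))) (f (α n) (π fun k => α (k + (n + 1)))) := by
            rw [hc, hπ]
            simp only [zero_add, add_assoc, add_comm 1 n]
        _ ≤ K * (K ^ m * D) := (hf _).dist_le_mul_of_le (ih (n + 1))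
        _ = K ^ (m + 1) * D := by ring
  have hlim : Tendsto (fun m => (K : ℝ) ^ m * D) atTop (𝓝 0) := by
    simpa using (tendsto_pow_atTop_nhds_zero_of_lt_one K.2 hK).mul_const D
  have hdist : dist x (π α) ≤ 0 := ge_of_tendsto' hlim fun m => hshift m 0
  exact ⟨α, (dist_le_zero.1 hdist).symm⟩

end IteratedFunctionSystem

namespace lp

variable {α : Type*} {E : α → Type*} [∀ i, NormedAddCommGroup (E i)] {p : ℝ≥0∞}

theorem finite_setOf_le_norm (hp : 0 < p.toReal) (f : lp E p) {ε : ℝ} (hε : 0 < ε) :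
    {i | ε ≤ ‖f i‖}.Finite := by
  have hsmall : ∀ᶠ i in cofinite, ‖f i‖ ^ p.toReal < ε ^ p.toReal :=
    ((lp.memℓp f).summable hp).tendsto_cofinite_zero.eventually_lt_const (by positivity)
  refine (eventually_cofinite.1 hsmall).subset fun i hi => ?_
  exact not_lt.2 (Real.rpow_le_rpow hε.le hi hp.le)

theorem norm_le_one_of_tsum_norm_le_one (hp : 1 ≤ p.toReal) (f : lp E p)
    (hf : Summable fun i => ‖f i‖) (h : ∑' i, ‖f i‖ ≤ 1) : ‖f‖ ≤ 1 := by
  have hle : ∀ i, ‖f i‖ ≤ 1 := fun i => (hf.le_tsum i fun j _ => norm_nonneg _).trans h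
  refine norm_le_of_tsum_le (by linarith) zero_le_one ?_
  rw [Real.one_rpow]
  refine (Summable.tsum_le_tsum (fun i => ?_) ((lp.memℓp f).summable (by linarith)) hf).trans h
  exact Real.rpow_le_self_of_le_one (norm_nonneg _) (hle i) hp

end lp

section Coding

variable {A : Type*} (z : A)

theorem tsum_pFun_le_one (α : ℕ → A) : ∑' b, pFun z α b ≤ 1 := by
  have hfiber : HasSum (fun a : A => ∑' k : α ⁻¹' {a}, (2 : ℝ)⁻¹ ^ ((k : ℕ) + 1)) 1 :=
    (tsum_base ▸ summable_base.hasSum).tsum_fiberwise α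
  rw [← hfiber.tsum_eq]
  exact hfiber.summable.tsum_subtype_le _ {b | b ≠ z} fun a => tsum_nonneg fun k => by positivity

theorem pFun_cons [DecidableEq A] (α : ℕ → A) (b : {b : A // b ≠ z}) :
    pFun z α b = (if α 0 = b then (2 : ℝ)⁻¹ else 0) + 2⁻¹ * pFun z (fun n => α (n + 1)) b := by
  rw [pFun_eq_indicator, pFun_eq_indicator, (summable_base.indicator _).tsum_eq_zero_add,
    ← tsum_mul_left]
  congr 1
  · simp [Set.indicator_apply]
  · refine tsum_congr fun n => ?_
    simp only [Set.indicator_apply, Set.mem_ofPred_eq]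
    split_ifs <;> ring

variable (P : ℝ≥0∞)

theorem uElem_apply [DecidableEq A] (a : A) (b : {b : A // b ≠ z}) :
    uElem z P a b = if a = b then 1 else 0 := by
  unfold uElem
  split_ifs with ha hab hab
  · exact absurd (ha ▸ hab) b.2.symm
  · rfl
  · subst hab; simp
  · simpa [Pi.single_apply] using fun h => hab (congrArg Subtype.val h).symm

theorem fMap_two_smul_sub (a : A) (x : lp (fun _ : {b : A // b ≠ z} => ℝ) P) :
    fMap z P a ((2 : ℝ) • x - uElem z P a) = x := by
  rw [fMap, sub_add_cancel, smul_smul]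
  norm_num

theorem two_smul_fMap_sub (a : A) (x : lp (fun _ : {b : A // b ≠ z} => ℝ) P) :
    (2 : ℝ) • fMap z P a x - uElem z P a = x := by
  rw [fMap, smul_smul]
  norm_num

variable [Fact (1 ≤ P)]

theorem pp_apply (α : ℕ → A) (b : {b : A // b ≠ z}) : pp z α P b = pFun z α b := rfl

theorem pp_cons (α : ℕ → A) : pp z α P = fMap z P (α 0) (pp z (fun n => α (n + 1)) P) := by
  classical
  ext b
  rw [fMap, lp.coeFn_smul, lp.coeFn_add, Pi.smul_apply, Pi.add_apply, uElem_apply, pp_apply,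
    pp_apply, pFun_cons, smul_eq_mul]
  split_ifs <;> ring

theorem lipschitzWith_fMap (a : A) : LipschitzWith 2⁻¹ (fMap z P a) :=
  LipschitzWith.of_dist_le_mul fun x y => by
    rw [dist_eq_norm, dist_eq_norm, fMap, fMap, ← smul_sub, add_sub_add_right_eq_sub, norm_smul]
    norm_num

theorem norm_pp_le_one (hP : P ≠ ∞) (α : ℕ → A) : ‖pp z α P‖ ≤ 1 := by
  have hp : 1 ≤ P.toReal := by
    simpa using ENNReal.toReal_mono hP (Fact.out : 1 ≤ P)
  have hnorm : ∀ b, ‖pp z α P b‖ = pFun z α b := fun b =>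
    Real.norm_of_nonneg (pFun_nonneg z α b)
  refine lp.norm_le_one_of_tsum_norm_le_one hp _ ?_ ?_ <;> simp only [hnorm]
  · exact summable_pFun z α
  · exact tsum_pFun_le_one z α

theorem isBounded_range_pp (hP : P ≠ ∞) : IsBounded (range fun α : ℕ → A => pp z α P) :=
  isBounded_closedBall.subset <| range_subset_iff.2 fun α =>
    mem_closedBall_zero_iff.2 (norm_pp_le_one z P hP α)

theorem inv_two_le_pp_apply (α : ℕ → A) (b : {b : A // b ≠ z}) (h : α 0 = b) :
    2⁻¹ ≤ pp z α P b :=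
  calc (2 : ℝ)⁻¹ = 2⁻¹ ^ (0 + 1) := by norm_num
    _ ≤ pp z α P b :=
      (summable_base.subtype _).le_tsum (⟨0, h⟩ : {k | α k = b}) fun _ _ =>
        pow_nonneg (by norm_num) _

theorem exists_frequently_head_eq (hP : P ≠ ∞) {β : ℕ → ℕ → A}
    {x : lp (fun _ : {b : A // b ≠ z} => ℝ) P}
    (hβ : Tendsto (fun n => pp z (β n) P) atTop (𝓝 x)) : ∃ a, ∃ᶠ n in atTop, β n 0 = a := by
  by_contra! hne
  have hP0 : P ≠ 0 := (one_pos.trans_le Fact.out).ne'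
  set T := insert z (Subtype.val '' {b | 4⁻¹ ≤ ‖x b‖})
  have hT : T.Finite :=
    ((lp.finite_setOf_le_norm (ENNReal.toReal_pos hP0 hP) x (by norm_num)).image _).insert z
  have hclose : ∀ᶠ n in atTop, ‖pp z (β n) P - x‖ < 4⁻¹ :=
    (tendsto_iff_norm_sub_tendsto_zero.1 hβ).eventually_lt_const (by norm_num)
  obtain ⟨n, hhead, hnear⟩ := (((eventually_all_finite hT).2 fun a _ => hne a).and hclose).exists
  set b : {b : A // b ≠ z} := ⟨β n 0, fun h => hhead z (mem_insert z _) h⟩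
  have hxb : ‖x b‖ < 4⁻¹ := not_le.1 fun h => hhead _ (mem_insert_of_mem z ⟨b, h, rfl⟩) rfl
  have hdiff : ‖pp z (β n) P b - x b‖ < 4⁻¹ :=
    (lp.norm_apply_le_norm hP0 _ b).trans_lt hnear
  have hhalf := inv_two_le_pp_apply z P (β n) b rfl
  rw [Real.norm_eq_abs, abs_lt] at hxb hdiff
  linarith [hxb.1, hdiff.1]

theorem closure_range_pp_subset (hP : P ≠ ∞) :
    closure (range fun α : ℕ → A => pp z α P) ⊆
      ⋃ a, fMap z P a '' closure (range fun α : ℕ → A => pp z α P) := by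
  intro x hx
  obtain ⟨u, hu, hlim⟩ := mem_closure_iff_seq_limit.1 hx
  choose β hβ using hu
  beta_reduce at hβ
  obtain ⟨a, ha⟩ := exists_frequently_head_eq z P hP (β := β) (by simpa only [hβ] using hlim)
  refine mem_iUnion.2 ⟨a, (2 : ℝ) • x - uElem z P a, ?_, fMap_two_smul_sub z P a x⟩
  refine mem_closure_of_frequently_of_tendsto (ha.mono fun n hn => ⟨fun k => β n (k + 1), ?_⟩)
    ((hlim.const_smul (2 : ℝ)).sub_const (uElem z P a))
  rw [← hβ n, pp_cons z P (β n), hn, two_smul_fMap_sub]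

end Coding

theorem omega_is_attractor_general {A : Type*} (z : A) (P : ℝ≥0∞) [Fact (1 ≤ P)]
    (hP : P ≠ ∞) :
    (Set.range fun α : ℕ → A => pp z α P).Nonempty ∧
    IsClosed (Set.range fun α : ℕ → A => pp z α P) ∧
    Bornology.IsBounded (Set.range fun α : ℕ → A => pp z α P) ∧
    closure (⋃ a : A, fMap z P a '' Set.range fun α : ℕ → A => pp z α P)
      = Set.range fun α : ℕ → A => pp z α P := by
  have hbdd := isBounded_range_pp z P hP
  have hclosed : IsClosed (range fun α : ℕ → A => pp z α P) :=
    isClosed_of_closure_subset <| subset_range_of_subset_iUnion_image (by norm_num)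
      (lipschitzWith_fMap z P) (pp_cons z P) hbdd hbdd.closure (closure_range_pp_subset z P hP)
  refine ⟨⟨_, mem_range_self fun _ => z⟩, hclosed, hbdd, ?_⟩
  rw [iUnion_image_range_eq_range (pp_cons z P), hclosed.closure_eq]

/-- Theorem 2.4, first part. For every `p ∈ [1, ∞)`, the set
`ω_p^A = p_p(N(A))` is a nonempty closed bounded subset of `l^p(A)` with
`closure (⋃ a, f_a '' ω_p^A) = ω_p^A`; i.e. it is the attractor of the IIFS
`(l^p(A), (f_a)_{a ∈ A})`. -/
theorem omega_is_attractor {A : Type*} [Infinite A] (z : A) (P : ℝ≥0∞) [Fact (1 ≤ P)]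
    (hP : P ≠ ∞) :
    (Set.range fun α : ℕ → A => pp z α P).Nonempty ∧
    IsClosed (Set.range fun α : ℕ → A => pp z α P) ∧
    Bornology.IsBounded (Set.range fun α : ℕ → A => pp z α P) ∧
    closure (⋃ a : A, fMap z P a '' Set.range fun α : ℕ → A => pp z α P)
      = Set.range fun α : ℕ → A => pp z α P :=
  omega_is_attractor_general z P hP
end

section
/- (Proposition 3.2) For every real p ≥ 1, the map p_p : N(A) → l^p(A) is continuous, where N(A) = A^ℕ carries the product topology with A discrete and l^p(A) carries the norm topology. -/
open scoped ENNReal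
open Filter Topology

/-! Writing `e a` for the unit vector of `l^p(A)` at `a` (with `e z = 0`), `p_p(α)` is the
absolutely convergent series `∑ₖ 2^{-(k+1)} e (α k)`. Its `k`-th term depends only on the
coordinate `α k` and has norm at most `2^{-(k+1)}`, so continuity follows from the
Weierstrass M-test. -/

open Classical in
noncomputable def deltaVec {A : Type*} (z : A) (P : ℝ≥0∞) (a : A) :
    lp (fun _ : {b : A // b ≠ z} => ℝ) P :=
  if h : a = z then 0 else lp.single P ⟨a, h⟩ 1

open Classical in
lemma deltaVec_apply {A : Type*} (z : A) (P : ℝ≥0∞) (a : A) (b : {b : A // b ≠ z}) :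
    deltaVec z P a b = if (b : A) = a then 1 else 0 := by
  unfold deltaVec
  split_ifs with ha hb hb
  · exact absurd (hb.trans ha) b.2
  · rfl
  · obtain rfl : b = ⟨a, ha⟩ := Subtype.ext hb
    simp
  · simp [Subtype.ext_iff, hb]

open Classical in
lemma norm_deltaVec_le {A : Type*} (z : A) {P : ℝ≥0∞} (hP : 0 < P) (a : A) :
    ‖deltaVec z P a‖ ≤ 1 := by
  unfold deltaVec
  split_ifs
  · simp
  · rw [lp.norm_single hP, norm_one]

lemma norm_smul_deltaVec_le {A : Type*} (z : A) (P : ℝ≥0∞) [Fact (1 ≤ P)] (a : A)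
    (k : ℕ) :
    ‖(2 : ℝ)⁻¹ ^ (k + 1) • deltaVec z P a‖ ≤ (2 : ℝ)⁻¹ ^ (k + 1) := by
  rw [norm_smul, Real.norm_of_nonneg (by positivity)]
  exact mul_le_of_le_one_right (by positivity)
    (norm_deltaVec_le z (zero_lt_one.trans_le Fact.out) a)

lemma pp_eq_tsum {A : Type*} (z : A) (α : ℕ → A) (P : ℝ≥0∞) [Fact (1 ≤ P)] :
    pp z α P = ∑' k : ℕ, (2 : ℝ)⁻¹ ^ (k + 1) • deltaVec z P (α k) := by
  classical
  have hsum : Summable fun k : ℕ => (2 : ℝ)⁻¹ ^ (k + 1) • deltaVec z P (α k) :=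
    summable_base.of_norm_bounded fun k => norm_smul_deltaVec_le z P (α k) k
  ext b
  refine (pFun_eq_indicator z α b).trans (Eq.trans (tsum_congr fun k => ?_)
    (hsum.hasSum.mapL (lp.evalCLM ℝ (fun _ : {b : A // b ≠ z} => ℝ) P b)).tsum_eq)
  show _ = (2 : ℝ)⁻¹ ^ (k + 1) * deltaVec z P (α k) b
  simp [deltaVec_apply, Set.indicator_apply, eq_comm]

theorem pp_continuous_general {A : Type*} [TopologicalSpace A] [DiscreteTopology A]
    (z : A) (P : ℝ≥0∞) [Fact (1 ≤ P)] :
    Continuous (fun α : ℕ → A => pp z α P) := by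
  have hδ : Continuous (deltaVec z P) := continuous_of_discreteTopology
  simp_rw [pp_eq_tsum]
  exact continuous_tsum
    (fun k => (hδ.comp (continuous_apply k)).const_smul ((2 : ℝ)⁻¹ ^ (k + 1)))
    summable_base fun k α => norm_smul_deltaVec_le z P (α k) k

/-- Proposition 3.2. For every `p ∈ [1, ∞)`, the map
`p_p : N(A) → l^p(A)` is continuous, where `N(A) = A^ℕ` carries the product topology with
`A` discrete and `l^p(A)` the norm topology. -/
theorem pp_continuous {A : Type*} [Infinite A] [TopologicalSpace A] [DiscreteTopology A]
    (z : A) (P : ℝ≥0∞) [Fact (1 ≤ P)] (hP : P ≠ ∞) :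
    Continuous (fun α : ℕ → A => pp z α P) :=
  pp_continuous_general z P
end

section
/- (Proposition 3.3) Let α, α^1, α^2, … : ℕ → A be sequences and set x = p_p(α), x_n = p_p(α^n). Suppose that for every q ∈ ℕ the sequence α is not constant after the index q (i.e. there exist s, t ≥ q with α(s) ≠ α(t)). If lim_{n→∞} ‖x_n − x‖_p = 0 in l^p(A), then α^n → α in the Baire space N(A), i.e. for every k ∈ ℕ there exists N such that for all n ≥ N and all j ≤ k, α^n(j) = α(j). -/
/-!
`p_p(γ)(b)` is the real number whose binary digits are the indicator of the level set `γ⁻¹{b}`.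
If `β` agrees with `α` below `j` but not at `j`, the level sets of `β j` and of `α j` first
differ at the digit `j`, and a differing leading digit is cancelled only when the later digits of
one side are all `1` and those of the other all `0`, as in `0.0111… = 0.1000…`. Because `α` is
not constant on `(j, M)`, this cancellation fails within the first `M + 1` digits for one of
these level sets or for the level set of a suitable `α u`, so some coordinate of
`p_p(β) - p_p(α)` has absolute value at least `2^{-(M+1)}`, and so has its `l^p`-norm.
Taking `M` past two indices `> k` at which `α` differs, `‖p_p(αⁿ) - p_p(α)‖ < 2^{-(M+1)}`
forces `αⁿ = α` on `[0, k]`.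
-/

open scoped ENNReal
open Filter Topology

open Set

noncomputable def binaryValue (S : Set ℕ) : ℝ :=
  ∑' m, S.indicator (fun m => (2 : ℝ)⁻¹ ^ (m + 1)) m

lemma binaryValue_nonneg (S : Set ℕ) : 0 ≤ binaryValue S :=
  tsum_nonneg <| indicator_nonneg fun m _ => by positivity

lemma binaryValue_union {S T : Set ℕ} (h : Disjoint S T) :
    binaryValue (S ∪ T) = binaryValue S + binaryValue T := by
  rw [binaryValue, binaryValue, binaryValue,
    ← (summable_base.indicator S).tsum_add (summable_base.indicator T)]
  exact tsum_congr fun m => by rw [indicator_union_of_disjoint h]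

lemma binaryValue_mono {S T : Set ℕ} (h : S ⊆ T) : binaryValue S ≤ binaryValue T := by
  rw [← union_sdiff_cancel h, binaryValue_union disjoint_sdiff_right]
  linarith [binaryValue_nonneg (T \ S)]

lemma binaryValue_singleton (i : ℕ) : binaryValue {i} = (2 : ℝ)⁻¹ ^ (i + 1) := by
  rw [binaryValue,
    tsum_eq_single i fun m hm => indicator_of_notMem (mem_singleton_iff.not.mpr hm) _]
  exact indicator_of_mem (mem_singleton i) _

lemma binaryValue_Ioi (i : ℕ) : binaryValue (Ioi i) = (2 : ℝ)⁻¹ ^ (i + 1) := by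
  have hhead : ∀ m ∈ Finset.range (i + 1),
      (Ioi i).indicator (fun m => (2 : ℝ)⁻¹ ^ (m + 1)) m = 0 := fun m hm =>
    indicator_of_notMem (by simp only [Finset.mem_range] at hm; simp only [mem_Ioi]; omega) _
  have hshift : ∀ m, (Ioi i).indicator (fun m => (2 : ℝ)⁻¹ ^ (m + 1)) (m + (i + 1)) =
      (2 : ℝ)⁻¹ ^ (i + 1) * (2 : ℝ)⁻¹ ^ (m + 1) := fun m => by
    rw [indicator_of_mem (by simp only [mem_Ioi]; omega), ← pow_add]
    ring_nf
  rw [binaryValue, ← (summable_base.indicator _).sum_add_tsum_nat_add (i + 1),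
    Finset.sum_eq_zero hhead, zero_add, tsum_congr hshift, tsum_mul_left, tsum_base, mul_one]

lemma pow_le_binaryValue {S : Set ℕ} {u : ℕ} (hu : u ∈ S) :
    (2 : ℝ)⁻¹ ^ (u + 1) ≤ binaryValue S :=
  binaryValue_singleton u ▸ binaryValue_mono (singleton_subset_iff.mpr hu)

lemma binaryValue_inter_Ioi_add_binaryValue_Ioi_diff_le_sub {S T : Set ℕ} {i : ℕ}
    (hlow : T ∩ Iio i ⊆ S) (hiS : i ∈ S) (hiT : i ∉ T) :
    binaryValue (S ∩ Ioi i) + binaryValue (Ioi i \ T) ≤ binaryValue S - binaryValue T := by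
  have hS : binaryValue (T ∩ Iio i) + (2 : ℝ)⁻¹ ^ (i + 1) + binaryValue (S ∩ Ioi i) ≤
      binaryValue S := by
    rw [← binaryValue_singleton, ← binaryValue_union, ← binaryValue_union]
    · exact binaryValue_mono (union_subset (union_subset hlow (by simpa)) inter_subset_left)
    · refine disjoint_left.mpr fun m hm hm' => ?_
      simp only [mem_union, mem_inter_iff, mem_Iio, mem_singleton_iff, mem_Ioi] at hm hm'
      omega
    · exact disjoint_singleton_right.mpr fun h => lt_irrefl i h.2
  have hT : binaryValue T = binaryValue (T ∩ Iio i) + binaryValue (T ∩ Ioi i) := by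
    rw [← binaryValue_union (Iio_disjoint_Ioi_same.mono inter_subset_right inter_subset_right),
      ← inter_union_distrib_left, Iio_union_Ioi,
      inter_eq_left.mpr (subset_compl_singleton_iff.mpr hiT)]
  have hTail : binaryValue (T ∩ Ioi i) + binaryValue (Ioi i \ T) = (2 : ℝ)⁻¹ ^ (i + 1) := by
    rw [← binaryValue_union, inter_comm, inter_union_sdiff, binaryValue_Ioi]
    exact disjoint_sdiff_right.mono_left inter_subset_left
  linarith

lemma pow_le_binaryValue_sub {S T : Set ℕ} {i u : ℕ} (hlow : T ∩ Iio i ⊆ S) (hiS : i ∈ S)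
    (hiT : i ∉ T) (hiu : i < u) (hu : u ∈ S ∨ u ∉ T) :
    (2 : ℝ)⁻¹ ^ (u + 1) ≤ binaryValue S - binaryValue T := by
  have key := binaryValue_inter_Ioi_add_binaryValue_Ioi_diff_le_sub hlow hiS hiT
  rcases hu with huS | huT
  · linarith [pow_le_binaryValue (S := S ∩ Ioi i) ⟨huS, hiu⟩, binaryValue_nonneg (Ioi i \ T)]
  · linarith [pow_le_binaryValue (S := Ioi i \ T) ⟨hiu, huT⟩, binaryValue_nonneg (S ∩ Ioi i)]

lemma pFun_eq_binaryValue {A : Type*} (z : A) (γ : ℕ → A) (b : {b : A // b ≠ z}) :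
    pFun z γ b = binaryValue {m | γ m = (b : A)} :=
  pFun_eq_indicator z γ b

lemma pow_le_pFun_sub {A : Type*} (z : A) {α β : ℕ → A} (b : {b : A // b ≠ z}) {i u : ℕ}
    (hlow : ∀ m < i, α m = b → β m = b) (hβi : β i = b) (hαi : α i ≠ b) (hiu : i < u)
    (hu : β u = b ∨ α u ≠ b) : (2 : ℝ)⁻¹ ^ (u + 1) ≤ pFun z β b - pFun z α b := by
  rw [pFun_eq_binaryValue, pFun_eq_binaryValue]
  exact pow_le_binaryValue_sub (fun m ⟨hm, hmi⟩ => hlow m hmi hm) hβi hαi hiu hu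

lemma exists_pow_le_abs_pFun_sub {A : Type*} (z : A) {α β : ℕ → A} {j M : ℕ}
    (hpre : ∀ m < j, β m = α m) (hj : β j ≠ α j)
    (hvar : ∀ x, ∃ u, j < u ∧ u < M ∧ α u ≠ x) :
    ∃ b : {b : A // b ≠ z}, (2 : ℝ)⁻¹ ^ (M + 1) ≤ |pFun z β b - pFun z α b| := by
  have hpow : ∀ u ≤ M, (2 : ℝ)⁻¹ ^ (M + 1) ≤ (2 : ℝ)⁻¹ ^ (u + 1) := fun u hu =>
    pow_le_pow_of_le_one (by norm_num) (by norm_num) (by omega)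
  by_cases hβz : β j = z
  · have hαz : α j ≠ z := fun h => hj (hβz.trans h.symm)
    by_cases hsep : ∃ u, j < u ∧ u ≤ M ∧ (α u = α j ∨ β u ≠ α j)
    · obtain ⟨u, hju, huM, hu⟩ := hsep
      refine ⟨⟨α j, hαz⟩, (hpow u huM).trans ?_⟩
      rw [abs_sub_comm]
      exact (pow_le_pFun_sub z _ (fun m hm h => (hpre m hm).symm.trans h) rfl hj hju hu).trans
        (le_abs_self _)
    -- Now `β m = α j ≠ α m` for `m ∈ (j, M]`, so the level sets of `α u ∉ {z, α j}` first
    -- differ at `u`, and that of `β` misses `u + 1`.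
    push Not at hsep
    obtain ⟨u, hju, huM, huz⟩ := hvar z
    have hβu : ∀ m, j < m → m ≤ M → β m ≠ α u := fun m hjm hmM h =>
      (hsep u hju huM.le).1 (((hsep m hjm hmM).2.symm.trans h).symm)
    have hlow : ∀ m < u, β m = α u → α m = α u := by
      intro m hmu hm
      rcases lt_trichotomy m j with hmj | rfl | hjm
      · exact (hpre m hmj).symm.trans hm
      · exact absurd (hβz.symm.trans hm) (Ne.symm huz)
      · exact absurd hm (hβu m hjm (by omega))
    refine ⟨⟨α u, huz⟩, (hpow (u + 1) huM).trans ?_⟩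
    rw [abs_sub_comm]
    exact (pow_le_pFun_sub z _ hlow rfl (hβu u hju huM.le) (Nat.lt_succ_self u)
      (Or.inr (hβu (u + 1) (by omega) huM))).trans (le_abs_self _)
  · obtain ⟨u, hju, huM, hu⟩ := hvar (β j)
    exact ⟨⟨β j, hβz⟩, (hpow u huM.le).trans <| (pow_le_pFun_sub z _
      (fun m hm h => (hpre m hm).trans h) rfl hj.symm hju (Or.inr hu)).trans (le_abs_self _)⟩

lemma abs_pFun_sub_le_norm_pp_sub {A : Type*} (z : A) (β α : ℕ → A) (P : ℝ≥0∞) [Fact (1 ≤ P)]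
    (b : {b : A // b ≠ z}) : |pFun z β b - pFun z α b| ≤ ‖pp z β P - pp z α P‖ :=
  lp.norm_apply_le_norm (zero_lt_one.trans_le Fact.out).ne' (pp z β P - pp z α P) b

lemma eq_of_norm_pp_sub_lt {A : Type*} (z : A) (P : ℝ≥0∞) [Fact (1 ≤ P)] {α β : ℕ → A}
    {k M : ℕ} (hvar : ∀ x, ∃ u, k < u ∧ u < M ∧ α u ≠ x)
    (hnorm : ‖pp z β P - pp z α P‖ < (2 : ℝ)⁻¹ ^ (M + 1)) : ∀ j ≤ k, β j = α j := by
  intro j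
  induction j using Nat.strong_induction_on with
  | _ j ih =>
    intro hjk
    by_contra hj
    obtain ⟨b, hb⟩ := exists_pow_le_abs_pFun_sub z (fun m hm => ih m hm (by omega)) hj
      fun x => (hvar x).imp fun u ⟨hku, hu⟩ => ⟨by omega, hu⟩
    linarith [abs_pFun_sub_le_norm_pp_sub z β α P b]

theorem baire_conv_of_norm_conv_general {A : Type*} (z : A) (P : ℝ≥0∞)
    [Fact (1 ≤ P)] (α : ℕ → A) (αs : ℕ → ℕ → A)
    (hnc : ∀ q : ℕ, ∃ s t : ℕ, q ≤ s ∧ q ≤ t ∧ α s ≠ α t)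
    (hlim : Tendsto (fun n : ℕ => ‖pp z (αs n) P - pp z α P‖) atTop (𝓝 0)) :
    ∀ k : ℕ, ∃ N : ℕ, ∀ n ≥ N, ∀ j ≤ k, αs n j = α j := by
  intro k
  obtain ⟨s, t, hs, ht, hst⟩ := hnc (k + 1)
  have hvar : ∀ x, ∃ u, k < u ∧ u < max s t + 1 ∧ α u ≠ x := fun x => by
    by_cases hsx : α s = x
    · exact ⟨t, by omega, by omega, fun htx => hst (hsx.trans htx.symm)⟩
    · exact ⟨s, by omega, by omega, hsx⟩
  obtain ⟨N, hN⟩ := eventually_atTop.mp (hlim.eventually_lt_const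
    (show (0 : ℝ) < (2 : ℝ)⁻¹ ^ (max s t + 1 + 1) by positivity))
  exact ⟨N, fun n hn => eq_of_norm_pp_sub_lt z P hvar (hN n hn)⟩

/-- Proposition 3.3. If `α` is not constant after any rank and
`‖p_p(αⁿ) - p_p(α)‖ → 0` in `l^p(A)`, then `αⁿ → α` in the Baire space: for every `k`
there is `N` such that `αⁿ j = α j` for all `n ≥ N` and `j ≤ k`. -/
theorem baire_conv_of_norm_conv {A : Type*} [Infinite A] (z : A) (P : ℝ≥0∞)
    [Fact (1 ≤ P)] (hP : P ≠ ∞) (α : ℕ → A) (αs : ℕ → ℕ → A)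
    (hnc : ∀ q : ℕ, ∃ s t : ℕ, q ≤ s ∧ q ≤ t ∧ α s ≠ α t)
    (hlim : Tendsto (fun n : ℕ => ‖pp z (αs n) P - pp z α P‖) atTop (𝓝 0)) :
    ∀ k : ℕ, ∃ N : ℕ, ∀ n ≥ N, ∀ j ≤ k, αs n j = α j :=
  baire_conv_of_norm_conv_general z P α αs hnc hlim
end

section
/- (Proposition 3.4) Let α, α^1, α^2, … : ℕ → A, set x = p_p(α) and x_n = p_p(α^n), and suppose there exist N ∈ ℕ with N ≥ 1 and a, b ∈ A with a ≠ b such that α(N) = a and α(k) = b for all k > N. If lim_{n→∞} ‖x_n − x‖_p = 0 in l^p(A), then for every m > N + 1 there exists L ∈ ℕ such that for every l ≥ L one of the following holds: (i) α^l(k) = α(k) for all k < N, α^l(N) = a, and α^l(k) = b for all k with N < k ≤ m; or (ii) α^l(k) = α(k) for all k < N, α^l(N) = b, and α^l(k) = a for all k with N < k ≤ m. -/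
/-!
Coordinate `c` of `p_p(γ)` is the binary number whose digits are the indicator of `γ⁻¹{c}`,
and the `lp` norm dominates every coordinate. Binary expansions are unique up to the carry
`0.0111… = 0.1000…`: if two digit sets first differ at `k` and their values are within
`2^{-(m+2)}`, then on `(k, m+1]` the one lacking `k` has every digit and the other none.
Comparing the colours `β k`, `γ k` and `a`, `b` shows that a sequence `β` close to the tail
sequence `γ = (…, a, b, b, …)` can first differ from it only at `N`, by taking the value `b`,
i.e. by following the swapped sequence `(…, b, a, a, …)` instead, which has the same image
under `p_p`. Induction on the length of the common prefix then gives the theorem.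
-/
open scoped ENNReal
open Filter Topology

open Set

noncomputable def dyadicSum (S : Set ℕ) : ℝ :=
  ∑' k : S, (2 : ℝ)⁻¹ ^ ((k : ℕ) + 1)

lemma dyadicSum_eq_tsum_indicator (S : Set ℕ) :
    dyadicSum S = ∑' k, S.indicator (fun k : ℕ => (2 : ℝ)⁻¹ ^ (k + 1)) k :=
  tsum_subtype S fun k : ℕ => (2 : ℝ)⁻¹ ^ (k + 1)

lemma dyadicSum_mono {S T : Set ℕ} (h : S ⊆ T) : dyadicSum S ≤ dyadicSum T := by
  rw [dyadicSum_eq_tsum_indicator, dyadicSum_eq_tsum_indicator]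
  exact Summable.tsum_le_tsum (indicator_le_indicator_of_subset h fun k => by positivity)
    (summable_base.indicator S) (summable_base.indicator T)

lemma dyadicSum_union {S T : Set ℕ} (h : Disjoint S T) :
    dyadicSum (S ∪ T) = dyadicSum S + dyadicSum T :=
  Summable.tsum_union_disjoint h (summable_base.subtype _) (summable_base.subtype _)

lemma dyadicSum_singleton (k : ℕ) : dyadicSum {k} = (2 : ℝ)⁻¹ ^ (k + 1) :=
  tsum_singleton k fun i : ℕ => (2 : ℝ)⁻¹ ^ (i + 1)

lemma dyadicSum_Ioi (k : ℕ) : dyadicSum (Ioi k) = (2 : ℝ)⁻¹ ^ (k + 1) := by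
  have h : ∀ i, (Ioi k).indicator (fun i => (2 : ℝ)⁻¹ ^ (i + 1)) i
      = 2⁻¹ * if k + 1 ≤ i then (2 : ℝ)⁻¹ ^ i else 0 := fun i => by
    by_cases hi : k < i <;> simp [hi, pow_succ']
  rw [dyadicSum_eq_tsum_indicator, tsum_congr h, tsum_mul_left, tsum_geometric_inv_two_ge]
  ring

lemma dyadicSum_sub_eq_of_inter_Iio_eq {S T : Set ℕ} {k : ℕ} (h : S ∩ Iio k = T ∩ Iio k) :
    dyadicSum S - dyadicSum T = dyadicSum (S ∩ Ici k) - dyadicSum (T ∩ Ici k) := by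
  have split : ∀ U : Set ℕ, dyadicSum U = dyadicSum (U ∩ Iio k) + dyadicSum (U ∩ Ici k) :=
    fun U => by
      rw [← dyadicSum_union, ← inter_union_distrib_left, Iio_union_Ici, inter_univ]
      exact (Iio_disjoint_Ici le_rfl).mono inter_subset_right inter_subset_right
  rw [split S, split T, h]
  ring

lemma pow_le_dyadicSum_sub_of_first_diff {S T : Set ℕ} {k j : ℕ} (h : S ∩ Iio k = T ∩ Iio k)
    (hkS : k ∈ S) (hkT : k ∉ T) (hkj : k < j) (hj : j ∈ S ∨ j ∉ T) :
    (2 : ℝ)⁻¹ ^ (j + 1) ≤ dyadicSum S - dyadicSum T := by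
  rw [dyadicSum_sub_eq_of_inter_Iio_eq h]
  have hTk : T ∩ Ici k ⊆ Ioi k := fun i hi =>
    (hi.2 : k ≤ i).lt_of_ne fun e : k = i => hkT (e ▸ hi.1)
  rcases hj with hjS | hjT
  · have hS : dyadicSum ({k} ∪ {j}) ≤ dyadicSum (S ∩ Ici k) := dyadicSum_mono <| by
      rintro i (rfl | rfl)
      exacts [⟨hkS, mem_Ici.2 le_rfl⟩, ⟨hjS, mem_Ici.2 hkj.le⟩]
    rw [dyadicSum_union (disjoint_singleton.2 hkj.ne), dyadicSum_singleton,
      dyadicSum_singleton] at hS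
    linarith [dyadicSum_Ioi k ▸ dyadicSum_mono hTk]
  · have hS : dyadicSum {k} ≤ dyadicSum (S ∩ Ici k) :=
      dyadicSum_mono (singleton_subset_iff.2 ⟨hkS, mem_Ici.2 le_rfl⟩)
    have hT : dyadicSum (T ∩ Ici k) ≤ dyadicSum (Ioi k \ {j}) :=
      dyadicSum_mono fun i hi => ⟨hTk hi, fun e => hjT (e ▸ hi.1)⟩
    have hIoi := dyadicSum_union (S := Ioi k \ {j}) disjoint_sdiff_left
    rw [sdiff_union_self, union_eq_left.2 (singleton_subset_iff.2 (mem_Ioi.2 hkj)), dyadicSum_Ioi,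
      dyadicSum_singleton] at hIoi
    rw [dyadicSum_singleton] at hS
    linarith

lemma pow_sub_pow_le_dyadicSum_sub_of_gap {S T : Set ℕ} {k j n : ℕ} (h : S ∩ Iio k = T ∩ Iio k)
    (hjS : j ∈ S) (hkj : k ≤ j) (hT : ∀ i, k ≤ i → i ≤ n → i ∉ T) :
    (2 : ℝ)⁻¹ ^ (j + 1) - (2 : ℝ)⁻¹ ^ (n + 1) ≤ dyadicSum S - dyadicSum T := by
  rw [dyadicSum_sub_eq_of_inter_Iio_eq h]
  have hS : dyadicSum {j} ≤ dyadicSum (S ∩ Ici k) :=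
    dyadicSum_mono (singleton_subset_iff.2 ⟨hjS, hkj⟩)
  have hTn : dyadicSum (T ∩ Ici k) ≤ dyadicSum (Ioi n) :=
    dyadicSum_mono fun i hi => not_le.1 fun hin => hT i hi.2 hin hi.1
  rw [dyadicSum_singleton] at hS
  rw [dyadicSum_Ioi] at hTn
  linarith

lemma pFun_eq_dyadicSum {A : Type*} (z : A) (γ : ℕ → A) (c : {c : A // c ≠ z}) :
    pFun z γ c = dyadicSum (γ ⁻¹' {(c : A)}) :=
  rfl

lemma abs_pFun_sub_le_norm {A : Type*} (z : A) (β γ : ℕ → A) (P : ℝ≥0∞) [Fact (1 ≤ P)]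
    (c : {c : A // c ≠ z}) : |pFun z β c - pFun z γ c| ≤ ‖pp z β P - pp z γ P‖ :=
  lp.norm_apply_le_norm (zero_lt_one.trans_le Fact.out).ne' (pp z β P - pp z γ P) c

section Digits

variable {A : Type*} {β γ : ℕ → A}

lemma preimage_inter_Iio_eq {k : ℕ} (h : ∀ i < k, β i = γ i) (c : A) :
    β ⁻¹' {c} ∩ Iio k = γ ⁻¹' {c} ∩ Iio k := by
  ext i
  simp +contextual [h]

lemma carry_of_first_diff {m k j : ℕ} {c : A}
    (hclose : |dyadicSum (β ⁻¹' {c}) - dyadicSum (γ ⁻¹' {c})| < (2 : ℝ)⁻¹ ^ (m + 2))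
    (hagree : ∀ i < k, β i = γ i) (hβk : β k = c) (hγk : γ k ≠ c) (hkj : k < j)
    (hjm : j ≤ m + 1) : β j ≠ c ∧ γ j = c := by
  by_contra hj
  have hgap := pow_le_dyadicSum_sub_of_first_diff (preimage_inter_Iio_eq hagree c) hβk hγk hkj
    (by simp only [mem_preimage, mem_singleton_iff]; tauto)
  have hpow : (2 : ℝ)⁻¹ ^ (m + 2) ≤ (2 : ℝ)⁻¹ ^ (j + 1) :=
    pow_le_pow_of_le_one (by norm_num) (by norm_num) (by omega)
  linarith [le_abs_self (dyadicSum (β ⁻¹' {c}) - dyadicSum (γ ⁻¹' {c}))]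

section TailSequence

variable {z a b : A} {N m : ℕ} (hab : a ≠ b) (hγN : γ N = a) (hγt : ∀ j, N < j → γ j = b)
  (hm : N < m) (hclose : ∀ c : {c : A // c ≠ z}, |pFun z β c - pFun z γ c| < (2 : ℝ)⁻¹ ^ (m + 2))
include hab hγN hγt hm hclose

lemma tail_eq_base_of_first_diff_eq_base {k : ℕ} (hk : k ≤ m) (hagree : ∀ i < k, β i = γ i)
    (hβk : β k = z) (hγk : γ k ≠ z) : k = N ∧ b = z := by
  set d := γ k
  have hd : ∀ j, k < j → j ≤ m + 1 → γ j ≠ d ∧ β j = d := fun j hkj hjm =>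
    carry_of_first_diff (abs_sub_comm (α := ℝ) _ _ ▸ hclose ⟨d, hγk⟩)
      (fun i hi => (hagree i hi).symm) rfl (hβk ▸ hγk.symm) hkj hjm
  have hkN : k ≤ N := by
    by_contra! hNk
    exact (hd (k + 1) (by omega) (by omega)).1 (by rw [hγt _ (by omega)]; exact (hγt k hNk).symm)
  by_contra hne
  obtain ⟨f, j₀, hfz, hkj₀, hj₀m, hγj₀⟩ : ∃ f j₀, f ≠ z ∧ k < j₀ ∧ j₀ ≤ m ∧ γ j₀ = f := by
    by_cases hbz : b = z
    · exact ⟨a, N, fun h => hab (h.trans hbz.symm), hkN.lt_of_ne fun h => hne ⟨h, hbz⟩,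
        hm.le, hγN⟩
    · exact ⟨b, N + 1, hbz, by omega, hm, hγt _ (by omega)⟩
  have hfd : f ≠ d := hγj₀ ▸ (hd j₀ hkj₀ (by omega)).1
  have hgap := pow_sub_pow_le_dyadicSum_sub_of_gap (n := m + 1)
    (preimage_inter_Iio_eq (fun i hi => (hagree i hi).symm) f) hγj₀ hkj₀.le
    fun i hki him hif => by
      rcases hki.eq_or_lt with rfl | hki
      · exact hfz (hif.symm.trans hβk)
      · exact hfd (hif.symm.trans (hd i hki him).2)
  have hpow : (2 : ℝ)⁻¹ ^ (m + 1) ≤ (2 : ℝ)⁻¹ ^ (j₀ + 1) :=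
    pow_le_pow_of_le_one (by norm_num) (by norm_num) (by omega)
  have hf := hclose ⟨f, hfz⟩
  rw [pFun_eq_dyadicSum, pFun_eq_dyadicSum] at hf
  linarith [neg_abs_le (dyadicSum (β ⁻¹' {f}) - dyadicSum (γ ⁻¹' {f})), pow_succ (2 : ℝ)⁻¹ (m + 1)]

lemma first_diff_eq_tail_start {k : ℕ} (hk : k ≤ m) (hagree : ∀ i < k, β i = γ i)
    (hne : β k ≠ γ k) : k = N ∧ β k = b := by
  by_cases hβk : β k = z
  · obtain ⟨rfl, hbz⟩ := tail_eq_base_of_first_diff_eq_base hab hγN hγt hm hclose hk hagree hβk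
      (hβk ▸ hne.symm)
    exact ⟨rfl, hβk.trans hbz.symm⟩
  have hc : ∀ j, k < j → j ≤ m + 1 → γ j = β k := fun j hkj hjm =>
    (carry_of_first_diff (hclose ⟨β k, hβk⟩) hagree rfl hne.symm hkj hjm).2
  rcases lt_trichotomy k N with hkN | rfl | hNk
  · refine absurd ((hc N hkN (by omega)).trans (hc (N + 1) (by omega) (by omega)).symm) ?_
    rwa [hγN, hγt _ (by omega)]
  · exact ⟨rfl, (hc (k + 1) (by omega) (by omega)).symm.trans (hγt _ (by omega))⟩
  · refine absurd (hc (k + 1) (by omega) (by omega)) ?_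
    rw [hγt _ (by omega), ← hγt k hNk]
    exact hne.symm

lemma agree_succ_or {γ' : ℕ → A} (hγ'N : γ' N = b) (hγ'γ : ∀ i < N, γ' i = γ i) {k : ℕ}
    (hk : k ≤ m) (h : ∀ i < k, β i = γ i) :
    (∀ i < k + 1, β i = γ i) ∨ (∀ i < k + 1, β i = γ' i) := by
  by_cases hβk : β k = γ k
  · left
    intro i hi
    rcases Nat.lt_add_one_iff_lt_or_eq.1 hi with hi | rfl
    exacts [h i hi, hβk]
  · obtain ⟨rfl, hβk⟩ := first_diff_eq_tail_start hab hγN hγt hm hclose hk h hβk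
    right
    intro i hi
    rcases Nat.lt_add_one_iff_lt_or_eq.1 hi with hi | rfl
    exacts [(h i hi).trans (hγ'γ i hi).symm, hβk.trans hγ'N.symm]

end TailSequence

lemma dyadicSum_preimage_inter_Ici {a b : A} {N : ℕ} (hab : a ≠ b) (hγN : γ N = a)
    (hγt : ∀ j, N < j → γ j = b) (c : A) :
    dyadicSum (γ ⁻¹' {c} ∩ Ici N) =
      ({a, b} : Set A).indicator (fun _ => (2 : ℝ)⁻¹ ^ (N + 1)) c := by
  by_cases hca : c = a
  · subst hca
    have hN : γ ⁻¹' {c} ∩ Ici N = {N} := by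
      ext j
      simp only [mem_inter_iff, mem_preimage, mem_singleton_iff, mem_Ici]
      refine ⟨fun ⟨hj, hNj⟩ => ?_, fun hj => ⟨hj ▸ hγN, hj.ge⟩⟩
      by_contra hjN
      exact hab (hj.symm.trans (hγt j (by omega)))
    rw [hN, dyadicSum_singleton, indicator_of_mem (mem_insert c _)]
  by_cases hcb : c = b
  · subst hcb
    have hN : γ ⁻¹' {c} ∩ Ici N = Ioi N := by
      ext j
      simp only [mem_inter_iff, mem_preimage, mem_singleton_iff, mem_Ici, mem_Ioi]
      refine ⟨fun ⟨hj, hNj⟩ => hNj.lt_of_ne ?_, fun hj => ⟨hγt j hj, hj.le⟩⟩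
      rintro rfl
      exact hab (hγN.symm.trans hj)
    rw [hN, dyadicSum_Ioi, indicator_of_mem (mem_insert_of_mem a (mem_singleton c))]
  have hN : γ ⁻¹' {c} ∩ Ici N = ∅ := by
    ext j
    simp only [mem_inter_iff, mem_preimage, mem_singleton_iff, mem_Ici, mem_empty_iff_false,
      iff_false, not_and]
    intro hj hNj
    rcases hNj.eq_or_lt with rfl | hNj
    exacts [hca (hj.symm.trans hγN), hcb (hj.symm.trans (hγt j hNj))]
  rw [hN, indicator_of_notMem (by simp [hca, hcb]), dyadicSum, tsum_empty]

lemma pFun_eq_of_swap_tail {z a b : A} {N : ℕ} {γ' : ℕ → A} (hab : a ≠ b) (hγN : γ N = a)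
    (hγt : ∀ j, N < j → γ j = b) (hγ'N : γ' N = b) (hγ't : ∀ j, N < j → γ' j = a)
    (hγ'γ : ∀ i < N, γ' i = γ i) : pFun z γ' = pFun z γ := by
  funext c
  rw [pFun_eq_dyadicSum, pFun_eq_dyadicSum, ← sub_eq_zero,
    dyadicSum_sub_eq_of_inter_Iio_eq (preimage_inter_Iio_eq hγ'γ _),
    dyadicSum_preimage_inter_Ici hab.symm hγ'N hγ't, dyadicSum_preimage_inter_Ici hab hγN hγt,
    pair_comm, sub_self]

lemma agree_or_agree_of_close {z a b : A} {N m : ℕ} {γ' : ℕ → A} (hab : a ≠ b)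
    (hγN : γ N = a) (hγt : ∀ j, N < j → γ j = b) (hγ'N : γ' N = b)
    (hγ't : ∀ j, N < j → γ' j = a) (hγ'γ : ∀ i < N, γ' i = γ i) (hm : N < m)
    (hclose : ∀ c : {c : A // c ≠ z}, |pFun z β c - pFun z γ c| < (2 : ℝ)⁻¹ ^ (m + 2)) :
    ∀ k ≤ m + 1, (∀ i < k, β i = γ i) ∨ (∀ i < k, β i = γ' i) := by
  have hclose' : ∀ c : {c : A // c ≠ z}, |pFun z β c - pFun z γ' c| < (2 : ℝ)⁻¹ ^ (m + 2) := by
    rwa [pFun_eq_of_swap_tail hab hγN hγt hγ'N hγ't hγ'γ]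
  intro k hk
  induction k with
  | zero => exact Or.inl fun i hi => absurd hi (Nat.not_lt_zero i)
  | succ k ih =>
    rcases ih (by omega) with h | h
    · exact agree_succ_or hab hγN hγt hm hclose hγ'N hγ'γ (by omega) h
    · exact (agree_succ_or hab.symm hγ'N hγ't hm hclose' hγN (fun i hi => (hγ'γ i hi).symm)
        (by omega) h).symm

end Digits

theorem eventual_shape_of_norm_conv_general {A : Type*} (z : A) (P : ℝ≥0∞)
    [Fact (1 ≤ P)] (α : ℕ → A) (αs : ℕ → ℕ → A)
    (N : ℕ) (a b : A) (hab : a ≠ b)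
    (hαN : α N = a) (htail : ∀ k : ℕ, N < k → α k = b)
    (hlim : Tendsto (fun n : ℕ => ‖pp z (αs n) P - pp z α P‖) atTop (𝓝 0)) :
    ∀ m : ℕ, N + 1 < m → ∃ L : ℕ, ∀ l ≥ L,
      ((∀ k < N, αs l k = α k) ∧ αs l N = a ∧ (∀ k : ℕ, N < k → k ≤ m → αs l k = b)) ∨
      ((∀ k < N, αs l k = α k) ∧ αs l N = b ∧ (∀ k : ℕ, N < k → k ≤ m → αs l k = a)) := by
  intro m hm
  set α' : ℕ → A := fun j => if j < N then α j else if j = N then b else a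
  have hα'N : α' N = b := by simp [α']
  have hα't : ∀ j, N < j → α' j = a := fun j hj => by simp [α', hj.not_gt, hj.ne']
  have hα'α : ∀ i < N, α' i = α i := fun i hi => by simp [α', hi]
  obtain ⟨L, hL⟩ := eventually_atTop.1 <|
    hlim.eventually_lt_const (by positivity : (0 : ℝ) < (2 : ℝ)⁻¹ ^ (m + 2))
  refine ⟨L, fun l hl => ?_⟩
  have hclose := fun c => (abs_pFun_sub_le_norm z (αs l) α P c).trans_lt (hL l hl)
  rcases agree_or_agree_of_close hab hαN htail hα'N hα't hα'α (by omega) hclose (m + 1) le_rfl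
    with h | h
  · exact Or.inl ⟨fun k hk => h k (by omega), (h N (by omega)).trans hαN,
      fun k hNk hkm => (h k (by omega)).trans (htail k hNk)⟩
  · exact Or.inr ⟨fun k hk => (h k (by omega)).trans (hα'α k hk), (h N (by omega)).trans hα'N,
      fun k hNk hkm => (h k (by omega)).trans (hα't k hNk)⟩

/-- Proposition 3.4. Suppose `α N = a`, `α k = b` for all `k > N`,
with `N ≥ 1` and `a ≠ b`. If `‖p_p(αⁿ) - p_p(α)‖ → 0` in `l^p(A)`, then for every
`m > N + 1` there is `L` such that for every `l ≥ L` either `αˡ` agrees with `α` before `N`,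
`αˡ N = a` and `αˡ k = b` for `N < k ≤ m`, or `αˡ` agrees with `α` before `N`, `αˡ N = b`
and `αˡ k = a` for `N < k ≤ m`. -/
theorem eventual_shape_of_norm_conv {A : Type*} [Infinite A] (z : A) (P : ℝ≥0∞)
    [Fact (1 ≤ P)] (hP : P ≠ ∞) (α : ℕ → A) (αs : ℕ → ℕ → A)
    (N : ℕ) (hN : 1 ≤ N) (a b : A) (hab : a ≠ b)
    (hαN : α N = a) (htail : ∀ k : ℕ, N < k → α k = b)
    (hlim : Tendsto (fun n : ℕ => ‖pp z (αs n) P - pp z α P‖) atTop (𝓝 0)) :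
    ∀ m : ℕ, N + 1 < m → ∃ L : ℕ, ∀ l ≥ L,
      ((∀ k < N, αs l k = α k) ∧ αs l N = a ∧ (∀ k : ℕ, N < k → k ≤ m → αs l k = b)) ∨
      ((∀ k < N, αs l k = α k) ∧ αs l N = b ∧ (∀ k : ℕ, N < k → k ≤ m → αs l k = a)) :=
  eventual_shape_of_norm_conv_general z P α αs N a b hab hαN htail hlim
end

section
/- (Theorem 3.1 (i)) Let α, α^1, α^2, … : ℕ → A be sequences, x = p_p(α), x_n = p_p(α^n). Suppose that for every q ∈ ℕ there exist s, t ≥ q with α(s) ≠ α(t) (α is not constant after any rank). Then lim_{n→∞} ‖x_n − x‖_p = 0 in l^p(A) if and only if α^n → α in the Baire space N(A) (product topology, A discrete). -/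
open scoped ENNReal
open Filter Topology

/-!
`p_p(α)(b)` is the mass of the fibre `α⁻¹(b)` for the measure on `ℕ` giving `k` the weight
`2^{-(k+1)}`, under which `[m, ∞)` has mass `2^{-m}`. If `β` agrees with `α` below `m`, the
fibres of `α` and `β` differ only inside `[m, ∞)`, and since the fibres are disjoint the `ℓ¹`
norm of `p_p(β) - p_p(α)`, which dominates its `ℓᵖ` norm, is at most `2 · 2^{-m}`.
Conversely, if `β` agrees with `α` below `k` but `β k ≠ α k`, the weight `2^{-(k+1)}` of `k`
moves from one fibre to another, and the tails beyond `k`, of total mass `2^{-(k+1)}`, can only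
compensate it if `α` is constant after `k`. When `α s ≠ α t` with `k < s, t`, this gives a
coordinate of `p_p(β) - p_p(α)` of size at least `2^{-(max s t + 2)}`.
-/

lemma Finset.sum_rpow_le_rpow_sum {ι : Type*} (s : Finset ι) {f : ι → ℝ}
    (hf : ∀ i ∈ s, 0 ≤ f i) {p : ℝ} (hp : 1 ≤ p) :
    ∑ i ∈ s, f i ^ p ≤ (∑ i ∈ s, f i) ^ p := by
  classical
  induction s using Finset.induction_on with
  | empty => simp [Real.zero_rpow (by linarith : p ≠ 0)]
  | insert i s hi ih =>
    rw [Finset.sum_insert hi, Finset.sum_insert hi]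
    have hs := fun j hj => hf j (Finset.mem_insert_of_mem hj)
    calc f i ^ p + ∑ j ∈ s, f j ^ p ≤ f i ^ p + (∑ j ∈ s, f j) ^ p := by gcongr; exact ih hs
      _ ≤ (f i + ∑ j ∈ s, f j) ^ p :=
        Real.add_rpow_le_rpow_add (hf i (Finset.mem_insert_self i s)) (Finset.sum_nonneg hs) hp

lemma lp.norm_le_of_forall_sum_norm_le {α : Type*} {E : α → Type*}
    [∀ i, NormedAddCommGroup (E i)] {p : ℝ≥0∞} (hp : 1 ≤ p) {C : ℝ} (f : lp E p)
    (hf : ∀ s : Finset α, ∑ i ∈ s, ‖f i‖ ≤ C) : ‖f‖ ≤ C := by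
  have hC : 0 ≤ C := by simpa using hf ∅
  rcases eq_or_ne p ∞ with rfl | hp_top
  · exact lp.norm_le_of_forall_le hC fun i => by simpa using hf {i}
  have hp_real : 1 ≤ p.toReal := by simpa using ENNReal.toReal_mono hp_top hp
  refine lp.norm_le_of_forall_sum_le (by linarith) hC fun s => ?_
  calc ∑ i ∈ s, ‖f i‖ ^ p.toReal ≤ (∑ i ∈ s, ‖f i‖) ^ p.toReal :=
        s.sum_rpow_le_rpow_sum (fun i _ => norm_nonneg _) hp_real
    _ ≤ C ^ p.toReal := by gcongr; exact hf s

noncomputable def dyadicMass (S : Set ℕ) : ℝ :=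
  ∑' k : S, (2 : ℝ)⁻¹ ^ ((k : ℕ) + 1)

lemma dyadicMass_nonneg (S : Set ℕ) : 0 ≤ dyadicMass S :=
  tsum_nonneg fun _ => by positivity

lemma dyadicMass_union {S T : Set ℕ} (h : Disjoint S T) :
    dyadicMass (S ∪ T) = dyadicMass S + dyadicMass T :=
  Summable.tsum_union_disjoint h (summable_base.subtype S) (summable_base.subtype T)

lemma dyadicMass_mono {S T : Set ℕ} (h : S ⊆ T) : dyadicMass S ≤ dyadicMass T := by
  rw [← Set.union_sdiff_cancel h, dyadicMass_union Set.disjoint_sdiff_right]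
  exact le_add_of_nonneg_right (dyadicMass_nonneg _)

lemma dyadicMass_singleton (k : ℕ) : dyadicMass {k} = (2 : ℝ)⁻¹ ^ (k + 1) :=
  tsum_singleton k fun k => (2 : ℝ)⁻¹ ^ (k + 1)

lemma le_dyadicMass_of_mem {S : Set ℕ} {k : ℕ} (h : k ∈ S) :
    (2 : ℝ)⁻¹ ^ (k + 1) ≤ dyadicMass S :=
  dyadicMass_singleton k ▸ dyadicMass_mono (Set.singleton_subset_iff.2 h)

lemma dyadicMass_Ici (m : ℕ) : dyadicMass (Set.Ici m) = (2 : ℝ)⁻¹ ^ m := by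
  induction m with
  | zero =>
    rw [show Set.Ici 0 = Set.univ from Set.Ici_bot, dyadicMass, pow_zero]
    exact (tsum_univ fun k : ℕ => (2 : ℝ)⁻¹ ^ (k + 1)).trans tsum_base
  | succ m ih =>
    have hsplit : Set.Ici m = {m} ∪ Set.Ici (m + 1) := by
      ext j
      simp only [Set.mem_Ici, Set.mem_union, Set.mem_singleton_iff]
      omega
    rw [hsplit, dyadicMass_union (by simp), dyadicMass_singleton, pow_succ] at ih
    rw [pow_succ]
    linarith

lemma dyadicMass_le_of_subset_Ici {S : Set ℕ} {m : ℕ} (h : S ⊆ Set.Ici m) :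
    dyadicMass S ≤ (2 : ℝ)⁻¹ ^ m :=
  dyadicMass_Ici m ▸ dyadicMass_mono h

lemma dyadicMass_add_le_of_subset_Ici {S T : Set ℕ} {m : ℕ} (hd : Disjoint S T)
    (hS : S ⊆ Set.Ici m) (hT : T ⊆ Set.Ici m) :
    dyadicMass S + dyadicMass T ≤ (2 : ℝ)⁻¹ ^ m :=
  dyadicMass_union hd ▸ dyadicMass_le_of_subset_Ici (Set.union_subset hS hT)

lemma sum_dyadicMass_le_of_subset_Ici {ι : Type*} {s : Finset ι} {t : ι → Set ℕ} {m : ℕ}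
    (hd : (s : Set ι).PairwiseDisjoint t) (ht : ∀ i ∈ s, t i ⊆ Set.Ici m) :
    ∑ i ∈ s, dyadicMass (t i) ≤ (2 : ℝ)⁻¹ ^ m := by
  unfold dyadicMass
  rw [← Summable.tsum_finset_bUnion_disjoint hd fun i _ => summable_base.subtype _]
  exact dyadicMass_le_of_subset_Ici (Set.iUnion₂_subset ht)

lemma dyadicMass_sub_eq_of_inter_Iio_eq {S T : Set ℕ} {m : ℕ} (h : S ∩ Set.Iio m = T ∩ Set.Iio m) :
    dyadicMass S - dyadicMass T = dyadicMass (S ∩ Set.Ici m) - dyadicMass (T ∩ Set.Ici m) := by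
  have hsplit : ∀ U : Set ℕ,
      dyadicMass U = dyadicMass (U ∩ Set.Iio m) + dyadicMass (U ∩ Set.Ici m) := fun U => by
    rw [← dyadicMass_union ((Set.Iio_disjoint_Ici le_rfl).mono Set.inter_subset_right
      Set.inter_subset_right), ← Set.inter_union_distrib_left, Set.Iio_union_Ici, Set.inter_univ]
  rw [hsplit S, hsplit T, h]
  ring

open Classical in
lemma dyadicMass_inter_Ici (S : Set ℕ) (k : ℕ) :
    dyadicMass (S ∩ Set.Ici k) =
      (if k ∈ S then (2 : ℝ)⁻¹ ^ (k + 1) else 0) + dyadicMass (S ∩ Set.Ici (k + 1)) := by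
  have hsplit : S ∩ Set.Ici k = (S ∩ {k}) ∪ (S ∩ Set.Ici (k + 1)) := by
    ext j
    simp only [Set.mem_inter_iff, Set.mem_Ici, Set.mem_union, Set.mem_singleton_iff]
    constructor
    · rintro ⟨hj, hkj⟩
      rcases hkj.eq_or_lt with rfl | hlt
      exacts [Or.inl ⟨hj, rfl⟩, Or.inr ⟨hj, hlt⟩]
    · rintro (⟨hj, rfl⟩ | ⟨hj, hkj⟩)
      exacts [⟨hj, le_rfl⟩, ⟨hj, Nat.le_of_succ_le hkj⟩]
  rw [hsplit, dyadicMass_union]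
  · split_ifs with hk
    · rw [Set.inter_eq_right.2 (Set.singleton_subset_iff.2 hk), dyadicMass_singleton]
    · rw [Set.inter_singleton_eq_empty.2 hk, dyadicMass, tsum_empty]
  · exact Set.disjoint_of_subset Set.inter_subset_right Set.inter_subset_right (by simp)

section coordinates

variable {A : Type*} (z : A) {α β : ℕ → A}

lemma pFun_eq_dyadicMass (b : {b : A // b ≠ z}) :
    pFun z α b = dyadicMass {k | α k = b} := rfl

lemma pFun_sub_pFun_eq_tail {m : ℕ} (hag : ∀ j < m, β j = α j) (b : {b : A // b ≠ z}) :
    pFun z β b - pFun z α b =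
      dyadicMass ({j | β j = b} ∩ Set.Ici m) - dyadicMass ({j | α j = b} ∩ Set.Ici m) := by
  rw [pFun_eq_dyadicMass, pFun_eq_dyadicMass]
  refine dyadicMass_sub_eq_of_inter_Iio_eq (Set.ext fun j => ?_)
  simp only [Set.mem_inter_iff, Set.mem_ofPred_eq, Set.mem_Iio]
  exact and_congr_left fun hj => by rw [hag j hj]

open Classical in
lemma pFun_sub_pFun_eq_ite {k : ℕ} (hag : ∀ j < k, β j = α j) (b : {b : A // b ≠ z}) :
    pFun z β b - pFun z α b =
      (if β k = b then (2 : ℝ)⁻¹ ^ (k + 1) else 0) - (if α k = b then (2 : ℝ)⁻¹ ^ (k + 1) else 0)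
        + dyadicMass ({j | β j = b} ∩ Set.Ici (k + 1))
        - dyadicMass ({j | α j = b} ∩ Set.Ici (k + 1)) := by
  rw [pFun_sub_pFun_eq_tail z hag, dyadicMass_inter_Ici {j | β j = b} k,
    dyadicMass_inter_Ici {j | α j = b} k]
  simp only [Set.mem_ofPred_eq]
  ring

lemma sum_abs_pFun_sub_pFun_le {m : ℕ} (hag : ∀ j < m, β j = α j)
    (s : Finset {b : A // b ≠ z}) :
    ∑ b ∈ s, |pFun z β b - pFun z α b| ≤ 2 * (2 : ℝ)⁻¹ ^ m := by
  have hfibres : ∀ γ : ℕ → A,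
      ∑ b ∈ s, dyadicMass ({j | γ j = b} ∩ Set.Ici m) ≤ (2 : ℝ)⁻¹ ^ m := fun γ =>
    sum_dyadicMass_le_of_subset_Ici
      (fun b _ c _ hbc => Set.disjoint_left.2 fun j hb hc =>
        hbc (Subtype.ext (hb.1.symm.trans hc.1)))
      fun b _ => Set.inter_subset_right
  calc ∑ b ∈ s, |pFun z β b - pFun z α b|
      ≤ ∑ b ∈ s, (dyadicMass ({j | β j = b} ∩ Set.Ici m)
          + dyadicMass ({j | α j = b} ∩ Set.Ici m)) := by
        gcongr with b
        rw [pFun_sub_pFun_eq_tail z hag]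
        exact (abs_sub _ _).trans_eq (by rw [abs_of_nonneg (dyadicMass_nonneg _),
          abs_of_nonneg (dyadicMass_nonneg _)])
    _ ≤ 2 * (2 : ℝ)⁻¹ ^ m := by
        rw [Finset.sum_add_distrib]
        linarith [hfibres β, hfibres α]

lemma pow_le_pFun_sub_pFun {k j : ℕ} (hag : ∀ i < k, β i = α i) (hk : β k ≠ α k)
    (hz : β k ≠ z) (hkj : k < j) (hj : α j ≠ β k) :
    (2 : ℝ)⁻¹ ^ (j + 1) ≤ pFun z β ⟨β k, hz⟩ - pFun z α ⟨β k, hz⟩ := by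
  have hb := pFun_sub_pFun_eq_ite z hag ⟨β k, hz⟩
  rw [if_pos rfl, if_neg (Ne.symm hk)] at hb
  have hαj := dyadicMass_add_le_of_subset_Ici (S := {i | α i = β k} ∩ Set.Ici (k + 1))
    (T := {j}) (Set.disjoint_singleton_right.2 fun h => hj h.1) Set.inter_subset_right
    (by simpa using hkj)
  rw [dyadicMass_singleton] at hαj
  linarith [dyadicMass_nonneg ({i | β i = β k} ∩ Set.Ici (k + 1))]

lemma exists_pow_le_abs_pFun_sub_pFun_of_apply_eq {k u : ℕ} (hag : ∀ i < k, β i = α i)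
    (hk : β k ≠ α k) (hz : β k = z) (hku : k < u) (hu : α u ≠ z) :
    ∃ b : {b : A // b ≠ z}, (2 : ℝ)⁻¹ ^ (u + 2) ≤ |pFun z β b - pFun z α b| := by
  have hhalf : (2 : ℝ)⁻¹ ^ (u + 1) = 2 * (2 : ℝ)⁻¹ ^ (u + 2) := by ring
  have hpos : (0 : ℝ) < (2 : ℝ)⁻¹ ^ (u + 2) := by positivity
  have hαu := le_dyadicMass_of_mem (S := {j | α j = α u} ∩ Set.Ici (k + 1)) ⟨rfl, hku⟩
  set c : {b : A // b ≠ z} := ⟨α k, fun h => hk (hz.trans h.symm)⟩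
  have hc := pFun_sub_pFun_eq_ite z hag c
  rw [if_neg hk, if_pos rfl] at hc
  by_cases hcu : α u = α k
  · rw [hcu] at hαu
    refine ⟨c, le_trans ?_ (neg_le_abs _)⟩
    linarith [dyadicMass_le_of_subset_Ici
      (S := {j | β j = α k} ∩ Set.Ici (k + 1)) Set.inter_subset_right]
  -- The coordinates at `c` and `d` sum to at least `2^{-(u+1)}`: beyond `k` the `β`-fibres of
  -- `α k` and `α u` together have mass at most `2^{-(k+1)}`, the weight that `k` took out of
  -- the fibre of `α k`, while the `α`-fibre of `α u` contains `u`.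
  set d : {b : A // b ≠ z} := ⟨α u, hu⟩
  have hd := pFun_sub_pFun_eq_ite z hag d
  rw [if_neg (show β k ≠ α u from fun h => hu (h.symm.trans hz)),
    if_neg (show α k ≠ α u from fun h => hcu h.symm)] at hd
  have hβcd := dyadicMass_add_le_of_subset_Ici
    (S := {j | β j = α k} ∩ Set.Ici (k + 1)) (T := {j | β j = α u} ∩ Set.Ici (k + 1))
    (Set.disjoint_left.2 fun j hc hd => hcu (hd.1.symm.trans hc.1)) Set.inter_subset_right
    Set.inter_subset_right
  rcases le_or_gt ((2 : ℝ)⁻¹ ^ (u + 2)) (-(pFun z β c - pFun z α c)) with h | h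
  · exact ⟨c, h.trans (neg_le_abs _)⟩
  · refine ⟨d, le_trans ?_ (neg_le_abs _)⟩
    linarith [dyadicMass_nonneg ({j | α j = α k} ∩ Set.Ici (k + 1))]

lemma exists_le_abs_pFun_sub_pFun {k s t : ℕ} (hs : k < s) (ht : k < t) (hst : α s ≠ α t)
    (hag : ∀ j < k, β j = α j) (hk : β k ≠ α k) :
    ∃ b : {b : A // b ≠ z}, (2 : ℝ)⁻¹ ^ (max s t + 2) ≤ |pFun z β b - pFun z α b| := by
  have hweight : ∀ {i j : ℕ}, i ≤ j → (2 : ℝ)⁻¹ ^ j ≤ (2 : ℝ)⁻¹ ^ i :=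
    pow_le_pow_of_le_one (by norm_num) (by norm_num)
  by_cases hz : β k = z
  · obtain ⟨u, hku, huN, hu⟩ : ∃ u, k < u ∧ u ≤ max s t ∧ α u ≠ z := by
      by_cases hsz : α s = z
      exacts [⟨t, ht, le_max_right s t, fun h => hst (hsz.trans h.symm)⟩,
        ⟨s, hs, le_max_left s t, hsz⟩]
    obtain ⟨b, hb⟩ := exists_pow_le_abs_pFun_sub_pFun_of_apply_eq z hag hk hz hku hu
    exact ⟨b, (hweight (by omega)).trans hb⟩
  · obtain ⟨j, hkj, hjN, hj⟩ : ∃ j, k < j ∧ j ≤ max s t ∧ α j ≠ β k := by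
      by_cases hsβ : α s = β k
      exacts [⟨t, ht, le_max_right s t, fun h => hst (hsβ.trans h.symm)⟩,
        ⟨s, hs, le_max_left s t, hsβ⟩]
    exact ⟨⟨β k, hz⟩, (hweight (by omega)).trans
      ((pow_le_pFun_sub_pFun z hag hk hz hkj hj).trans (le_abs_self _))⟩

lemma norm_pp_sub_pp_le (P : ℝ≥0∞) [Fact (1 ≤ P)] {m : ℕ} (hag : ∀ j < m, β j = α j) :
    ‖pp z β P - pp z α P‖ ≤ 2 * (2 : ℝ)⁻¹ ^ m :=
  lp.norm_le_of_forall_sum_norm_le Fact.out _ fun s =>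
    sum_abs_pFun_sub_pFun_le z hag s

lemma abs_pFun_sub_pFun_le_norm (P : ℝ≥0∞) [Fact (1 ≤ P)] (b : {b : A // b ≠ z}) :
    |pFun z β b - pFun z α b| ≤ ‖pp z β P - pp z α P‖ :=
  lp.norm_apply_le_norm (zero_lt_one.trans_le Fact.out).ne' (pp z β P - pp z α P) b

end coordinates

theorem norm_conv_iff_baire_conv_general {A : Type*} [TopologicalSpace A]
    [DiscreteTopology A] (z : A) (P : ℝ≥0∞) [Fact (1 ≤ P)]
    (α : ℕ → A) (αs : ℕ → ℕ → A)
    (hnc : ∀ q : ℕ, ∃ s t : ℕ, q ≤ s ∧ q ≤ t ∧ α s ≠ α t) :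
    Tendsto (fun n : ℕ => ‖pp z (αs n) P - pp z α P‖) atTop (𝓝 0) ↔
      Tendsto (fun n : ℕ => αs n) atTop (𝓝 α) := by
  simp only [tendsto_pi_nhds, nhds_discrete, tendsto_pure]
  have hprefix : ∀ m, (∀ j < m, ∀ᶠ n in atTop, αs n j = α j) →
      ∀ᶠ n in atTop, ∀ j < m, αs n j = α j := fun m h =>
    (Set.finite_Iio m).eventually_all.2 h
  constructor
  · intro hnorm k
    induction k using Nat.strong_induction_on with
    | _ k ih =>
      obtain ⟨s, t, hs, ht, hst⟩ := hnc (k + 1)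
      filter_upwards [hprefix k ih, hnorm.eventually_lt_const (by positivity :
        (0 : ℝ) < (2 : ℝ)⁻¹ ^ (max s t + 2))] with n hagree hclose
      by_contra hk
      obtain ⟨b, hb⟩ := exists_le_abs_pFun_sub_pFun z hs ht hst hagree hk
      exact (hb.trans (abs_pFun_sub_pFun_le_norm z P b)).not_gt hclose
  · intro hconv
    have hbound : Tendsto (fun m : ℕ => 2 * (2 : ℝ)⁻¹ ^ m) atTop (𝓝 0) := by
      simpa using (tendsto_pow_atTop_nhds_zero_of_lt_one (by norm_num : (0 : ℝ) ≤ 2⁻¹)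
        (by norm_num)).const_mul 2
    refine tendsto_order.2 ⟨fun a ha => .of_forall fun n => ha.trans_le (norm_nonneg _),
      fun ε hε => ?_⟩
    obtain ⟨m, hm⟩ := (hbound.eventually_lt_const hε).exists
    filter_upwards [hprefix m fun j _ => hconv j] with n hagree
    exact (norm_pp_sub_pp_le z P hagree).trans_lt hm

/-- Theorem 3.1 (i). If `α` is not constant after any rank, then
`‖p_p(αⁿ) - p_p(α)‖ → 0` in `l^p(A)` iff `αⁿ → α` in the Baire space `N(A)` (product
topology, `A` discrete). -/
theorem norm_conv_iff_baire_conv {A : Type*} [Infinite A] [TopologicalSpace A]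
    [DiscreteTopology A] (z : A) (P : ℝ≥0∞) [Fact (1 ≤ P)] (hP : P ≠ ∞)
    (α : ℕ → A) (αs : ℕ → ℕ → A)
    (hnc : ∀ q : ℕ, ∃ s t : ℕ, q ≤ s ∧ q ≤ t ∧ α s ≠ α t) :
    Tendsto (fun n : ℕ => ‖pp z (αs n) P - pp z α P‖) atTop (𝓝 0) ↔
      Tendsto (fun n : ℕ => αs n) atTop (𝓝 α) :=
  norm_conv_iff_baire_conv_general z P α αs hnc
end
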